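/- arXiv:2501.08150 — 6 statements merged into one kernel-verified Lean document; each statement's English description precedes it below -/
import Mathlib

section
/- Let X₁, …, Xₙ be i.i.d. real-valued random variables with cumulative distribution function F such that ∫_ℝ √(F(t)(1 − F(t))) dt < ∞, and let F̂ₙ be their empirical cdf. Then E[∫_ℝ |F̂ₙ(t) − F(t)| dt] ≤ (1/√n) ∫_ℝ √(F(t)(1 − F(t))) dt. -/
open MeasureTheory ProbabilityTheory Filter Set

/-- Cauchy–Schwarz: `E|Z| ≤ √(E Z²)` on a probability space. -/
lemma aux_integral_abs_le_sqrt_sq {Ω : Type*} [MeasurableSpace Ω] {μ : Measure Ω}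
    [IsProbabilityMeasure μ] {Z : Ω → ℝ} (hZ : MemLp Z 2 μ) :
    ∫ ω, |Z ω| ∂μ ≤ Real.sqrt (∫ ω, Z ω ^ 2 ∂μ) := by
  have hpq : Real.HolderConjugate 2 2 := Real.HolderConjugate.two_two
  have h2 : ENNReal.ofReal (2 : ℝ) = 2 := by norm_num
  have hZ' : MemLp Z (ENNReal.ofReal (2 : ℝ)) μ := by rw [h2]; exact hZ
  have hone : MemLp (fun _ : Ω => (1 : ℝ)) (ENNReal.ofReal (2 : ℝ)) μ := by
    rw [h2]; exact memLp_const 1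
  have H := integral_mul_norm_le_Lp_mul_Lq hpq hZ' hone
  simp only [norm_one, mul_one, Real.norm_eq_abs, Real.one_rpow, integral_const,
    measure_univ, ENNReal.toReal_one, one_smul, probReal_univ] at H
  have habs : ∀ a, |Z a| ^ (2 : ℝ) = Z a ^ 2 := fun a => by
    rw [show (2 : ℝ) = ((2 : ℕ) : ℝ) by norm_num, Real.rpow_natCast, sq_abs]
  simp only [habs] at H
  calc ∫ ω, |Z ω| ∂μ ≤ (∫ ω, Z ω ^ 2 ∂μ) ^ (1 / 2 : ℝ) := H
    _ = Real.sqrt (∫ ω, Z ω ^ 2 ∂μ) := (Real.sqrt_eq_rpow _).symm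

/-- The key pointwise-in-`t` bound for the empirical cdf. -/
lemma aux_bernoulli_bound {Ω : Type*} [MeasurableSpace Ω] (μ : Measure Ω)
    [IsProbabilityMeasure μ] (n : ℕ) (hn : 0 < n)
    (X : Fin n → Ω → ℝ) (hXmeas : ∀ i, Measurable (X i))
    (hindep : iIndepFun X μ) (t : ℝ) (p : ℝ)
    (hp : ∀ i, p = (μ {ω | X i ω ≤ t}).toReal) :
    ∫ ω, |(n : ℝ)⁻¹ * (∑ i, if X i ω ≤ t then (1 : ℝ) else 0) - p| ∂μ ≤
      Real.sqrt (p * (1 - p)) / Real.sqrt n := by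
  classical
  have hn' : (n : ℝ) ≠ 0 := Nat.cast_ne_zero.2 hn.ne'
  set g : ℝ → ℝ := fun x => if x ≤ t then 1 else 0 with hg
  have hgmeas : Measurable g := Measurable.ite measurableSet_Iic measurable_const measurable_const
  set Y : Fin n → Ω → ℝ := fun i => g ∘ X i with hY
  have hYmeas : ∀ i, Measurable (Y i) := fun i => hgmeas.comp (hXmeas i)
  have hYindep : iIndepFun Y μ :=
    hindep.comp (fun _ => g) fun _ => hgmeas
  have hY2 : ∀ i, MemLp (Y i) 2 μ := by
    intro i
    refine memLp_of_bounded (a := (0:ℝ)) (b := 1) (Eventually.of_forall fun ω => ?_)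
      (hYmeas i).aestronglyMeasurable 2
    simp only [Y, g, Function.comp_apply, Set.mem_Icc]
    split <;> norm_num
  have hEY : ∀ i, ∫ ω, Y i ω ∂μ = p := by
    intro i
    have hs : MeasurableSet {ω | X i ω ≤ t} := measurableSet_le (hXmeas i) measurable_const
    have hind : (fun ω => Y i ω) = Set.indicator {ω | X i ω ≤ t} (fun _ => (1:ℝ)) := by
      ext ω; simp [Y, g, Set.indicator_apply, Set.mem_setOf_eq]
    rw [hind, integral_indicator_const _ hs, hp i, smul_eq_mul, mul_one]; rfl
  have hvarY : ∀ i, variance (Y i) μ = p * (1 - p) := by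
    intro i
    rw [variance_eq_sub (hY2 i)]
    have hsq : (Y i) ^ 2 = Y i := by
      ext ω; simp only [Pi.pow_apply, Y, g, Function.comp_apply]; split <;> norm_num
    rw [hsq]
    have : μ[Y i] = p := hEY i
    rw [this]; ring
  set S : Ω → ℝ := ∑ i, Y i with hS
  have hSapp : ∀ ω, S ω = ∑ i, Y i ω := fun ω => by simp [S]
  have hSmem : MemLp S 2 μ := memLp_finset_sum' _ fun i _ => hY2 i
  have hES : μ[S] = n * p := by
    rw [hS]
    simp only [Finset.sum_apply]
    rw [integral_finset_sum _ fun i _ => (hY2 i).integrable one_le_two]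
    simp [hEY, Finset.sum_const, Finset.card_univ, nsmul_eq_mul]
  have hvarS : variance S μ = n * (p * (1 - p)) := by
    rw [hS, IndepFun.variance_sum (fun i _ => hY2 i)
      (fun i _ j _ hij => hYindep.indepFun hij)]
    simp [hvarY, Finset.sum_const, Finset.card_univ, nsmul_eq_mul]
  have hZmem : MemLp (fun ω => S ω - n * p) 2 μ := hSmem.sub (memLp_const _)
  have hZsq : ∫ ω, (S ω - n * p) ^ 2 ∂μ = n * (p * (1 - p)) := by
    rw [← hvarS, variance_eq_integral hSmem.aemeasurable, hES]
  have habs : ∫ ω, |S ω - n * p| ∂μ ≤ Real.sqrt (n * (p * (1 - p))) := by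
    have := aux_integral_abs_le_sqrt_sq hZmem
    rwa [hZsq] at this
  have hrw : ∀ ω, |(n : ℝ)⁻¹ * (∑ i, if X i ω ≤ t then (1 : ℝ) else 0) - p|
      = (n : ℝ)⁻¹ * |S ω - n * p| := by
    intro ω
    have hSeq : S ω = ∑ i, if X i ω ≤ t then (1 : ℝ) else 0 := by
      rw [hSapp]; rfl
    rw [← abs_of_nonneg (inv_nonneg.2 (Nat.cast_nonneg n) : (0:ℝ) ≤ (n:ℝ)⁻¹), ← abs_mul]
    congr 1
    rw [hSeq, mul_sub, ← mul_assoc, inv_mul_cancel₀ hn', one_mul,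
      abs_of_nonneg (inv_nonneg.2 (Nat.cast_nonneg n) : (0:ℝ) ≤ (n:ℝ)⁻¹)]
  calc ∫ ω, |(n : ℝ)⁻¹ * (∑ i, if X i ω ≤ t then (1 : ℝ) else 0) - p| ∂μ
      = ∫ ω, (n : ℝ)⁻¹ * |S ω - n * p| ∂μ := by simp_rw [hrw]
    _ = (n : ℝ)⁻¹ * ∫ ω, |S ω - n * p| ∂μ := integral_const_mul _ _
    _ ≤ (n : ℝ)⁻¹ * Real.sqrt (n * (p * (1 - p))) := by
        apply mul_le_mul_of_nonneg_left habs (by positivity)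
    _ = Real.sqrt (p * (1 - p)) / Real.sqrt n := by
        rw [Real.sqrt_mul (Nat.cast_nonneg n)]
        have h1 : (0:ℝ) < Real.sqrt n := Real.sqrt_pos.2 (by exact_mod_cast hn)
        rw [eq_div_iff h1.ne']
        calc (n : ℝ)⁻¹ * (Real.sqrt n * Real.sqrt (p * (1 - p))) * Real.sqrt n
            = (Real.sqrt n * Real.sqrt n) * Real.sqrt (p * (1 - p)) * (n : ℝ)⁻¹ := by ring
          _ = Real.sqrt (p * (1 - p)) := by
              rw [Real.mul_self_sqrt (Nat.cast_nonneg n)]; field_simp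

set_option maxHeartbeats 1000000 in
/-- **Expected 1-Wasserstein distance between the empirical cdf and the true cdf.**
If `X₁, …, Xₙ` are i.i.d. real random variables with cdf `F` such that
`∫ √(F(t)(1 − F(t))) dt < ∞`, and `F̂ₙ` denotes their empirical cdf, then
`E[∫ |F̂ₙ(t) − F(t)| dt] ≤ (1/√n) ∫ √(F(t)(1 − F(t))) dt`. -/
theorem expected_W1_empirical_cdf_le
    {Ω : Type*} [MeasurableSpace Ω] (μ : Measure Ω) [IsProbabilityMeasure μ]
    (n : ℕ) (hn : 0 < n)
    (X : Fin n → Ω → ℝ) (hXmeas : ∀ i, Measurable (X i))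
    (hindep : iIndepFun X μ)
    (F : ℝ → ℝ) (hcdf : ∀ i t, F t = (μ {ω | X i ω ≤ t}).toReal)
    (hint : Integrable (fun t => Real.sqrt (F t * (1 - F t)))) :
    (∫ ω, (∫ t, |(n : ℝ)⁻¹ * (∑ i, if X i ω ≤ t then (1 : ℝ) else 0) - F t|) ∂μ) ≤
      (1 / Real.sqrt n) * ∫ t, Real.sqrt (F t * (1 - F t)) := by
  classical
  have hn' : (n : ℝ) ≠ 0 := Nat.cast_ne_zero.2 hn.ne'
  set H : Ω → ℝ → ℝ := fun ω t => |(n : ℝ)⁻¹ * (∑ i, if X i ω ≤ t then (1 : ℝ) else 0) - F t|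
    with hHdef
  -- measurability
  have hFmono : Monotone F := by
    intro s t hst
    rw [hcdf ⟨0, hn⟩ s, hcdf ⟨0, hn⟩ t]
    exact ENNReal.toReal_mono (measure_ne_top μ _)
      (measure_mono fun ω h => le_trans h hst)
  have hFmeas : Measurable F := hFmono.measurable
  have hHmeas : Measurable (fun q : Ω × ℝ => H q.1 q.2) := by
    apply Measurable.abs
    apply Measurable.sub
    · apply Measurable.const_mul
      apply Finset.measurable_sum
      intro i _
      exact Measurable.ite
        (measurableSet_le ((hXmeas i).comp measurable_fst) measurable_snd)
        measurable_const measurable_const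
    · exact hFmeas.comp measurable_snd
  have hHnonneg : ∀ ω t, 0 ≤ H ω t := fun ω t => abs_nonneg _
  -- boundedness in ω for fixed t
  have hHbd : ∀ t ω, ‖H ω t‖ ≤ 1 + |F t| := by
    intro t ω
    have h0 : (0:ℝ) ≤ ∑ i, if X i ω ≤ t then (1 : ℝ) else 0 :=
      Finset.sum_nonneg fun i _ => by split <;> norm_num
    have h1 : (∑ i, if X i ω ≤ t then (1 : ℝ) else 0) ≤ n := by
      calc (∑ i, if X i ω ≤ t then (1 : ℝ) else 0) ≤ ∑ _i : Fin n, (1:ℝ) :=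
            Finset.sum_le_sum fun i _ => by split <;> norm_num
        _ = n := by simp
    have h2 : (n : ℝ)⁻¹ * (∑ i, if X i ω ≤ t then (1 : ℝ) else 0) ≤ 1 := by
      calc (n : ℝ)⁻¹ * (∑ i, if X i ω ≤ t then (1 : ℝ) else 0) ≤ (n : ℝ)⁻¹ * n :=
            mul_le_mul_of_nonneg_left h1 (by positivity)
        _ = 1 := by field_simp
    have h3 : (0:ℝ) ≤ (n : ℝ)⁻¹ * (∑ i, if X i ω ≤ t then (1 : ℝ) else 0) := by positivity
    rw [Real.norm_eq_abs, hHdef, abs_abs]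
    calc |(n : ℝ)⁻¹ * (∑ i, if X i ω ≤ t then (1 : ℝ) else 0) - F t|
        ≤ |(n : ℝ)⁻¹ * (∑ i, if X i ω ≤ t then (1 : ℝ) else 0)| + |F t| := abs_sub _ _
      _ ≤ 1 + |F t| := by
          apply add_le_add_left
          rw [abs_of_nonneg h3]; exact h2
  have hHint : ∀ t, Integrable (fun ω => H ω t) μ := by
    intro t
    have hm : Measurable (fun ω => H ω t) :=
      hHmeas.comp (measurable_id.prodMk measurable_const)
    exact (memLp_one_iff_integrable.1 <|
      MemLp.of_bound hm.aestronglyMeasurable (1 + |F t|) (Eventually.of_forall (hHbd t)))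
  -- per-t bound
  have hbound : ∀ t, ∫ ω, H ω t ∂μ ≤ Real.sqrt (F t * (1 - F t)) / Real.sqrt n :=
    fun t => aux_bernoulli_bound μ n hn X hXmeas hindep t (F t) (fun i => hcdf i t)
  set RHS : ℝ := (1 / Real.sqrt n) * ∫ t, Real.sqrt (F t * (1 - F t)) with hRHS
  have hRHS0 : 0 ≤ RHS :=
    mul_nonneg (by positivity) (integral_nonneg fun t => Real.sqrt_nonneg _)
  -- lintegral chain
  have hchain : (∫⁻ ω, ENNReal.ofReal (∫ t, H ω t) ∂μ) ≤ ENNReal.ofReal RHS := by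
    calc ∫⁻ ω, ENNReal.ofReal (∫ t, H ω t) ∂μ
        ≤ ∫⁻ ω, ∫⁻ t, ENNReal.ofReal (H ω t) ∂(volume) ∂μ := by
          apply lintegral_mono
          intro ω
          dsimp only
          rw [integral_eq_lintegral_of_nonneg_ae (Eventually.of_forall fun t => hHnonneg ω t)
            ((hHmeas.comp (measurable_const.prodMk measurable_id)).aestronglyMeasurable)]
          exact ENNReal.ofReal_toReal_le
      _ = ∫⁻ t, ∫⁻ ω, ENNReal.ofReal (H ω t) ∂μ ∂(volume) :=
          lintegral_lintegral_swap (hHmeas.ennreal_ofReal.aemeasurable)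
      _ ≤ ∫⁻ t, ENNReal.ofReal (Real.sqrt (F t * (1 - F t)) / Real.sqrt n) ∂(volume) := by
          apply lintegral_mono
          intro t
          dsimp only
          rw [← ofReal_integral_eq_lintegral_ofReal (hHint t)
            (Eventually.of_forall fun ω => hHnonneg ω t)]
          exact ENNReal.ofReal_le_ofReal (hbound t)
      _ = ENNReal.ofReal (∫ t, Real.sqrt (F t * (1 - F t)) / Real.sqrt n) :=
          (ofReal_integral_eq_lintegral_ofReal (hint.div_const _)
            (Eventually.of_forall fun t => by positivity)).symm
      _ = ENNReal.ofReal RHS := by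
          rw [integral_div, hRHS, div_eq_mul_inv, one_div, mul_comm]
  calc (∫ ω, (∫ t, H ω t) ∂μ)
      = (∫⁻ ω, ENNReal.ofReal (∫ t, H ω t) ∂μ).toReal := by
        rw [integral_eq_lintegral_of_nonneg_ae
          (Eventually.of_forall fun ω => integral_nonneg fun t => hHnonneg ω t)
          (hHmeas.stronglyMeasurable.integral_prod_right').aestronglyMeasurable]
    _ ≤ RHS := ENNReal.toReal_le_of_le_ofReal hRHS0 hchain
end

section
/- Let A and B be cumulative distribution functions on ℝ with finite second moments and with σ_A > 0 and σ_B > 0, where μ_A, μ_B and σ_A, σ_B are the means and standard deviations computed from the quantile functions. Then ∫₀¹ (Q_A(q) − Q_B(q))² dq = (μ_A − μ_B)² + (σ_A − σ_B)² + 2 σ_A σ_B (1 − ρ^{A,B}), where the left-hand side is the squared 2-Wasserstein distance W₂²(A, B). -/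
open MeasureTheory Filter Set

/-- A cumulative distribution function on `ℝ`: monotone, right-continuous, with limits
`0` at `−∞` and `1` at `+∞`. -/
def IsCDF (F : ℝ → ℝ) : Prop :=
  Monotone F ∧ (∀ x, ContinuousWithinAt F (Set.Ici x) x) ∧
    Tendsto F atBot (nhds 0) ∧ Tendsto F atTop (nhds 1)

/-- The quantile function of a cdf: `Q_F(q) = inf {x : F x ≥ q}`. -/
noncomputable def quantile (F : ℝ → ℝ) (q : ℝ) : ℝ := sInf {x : ℝ | q ≤ F x}

/-- The mean computed from the quantile function: `μ_F = ∫₀¹ Q_F(q) dq`. -/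
noncomputable def qMean (F : ℝ → ℝ) : ℝ := ∫ q in Set.Ioo (0:ℝ) 1, quantile F q

/-- The variance computed from the quantile function: `σ_F² = ∫₀¹ Q_F(q)² dq − μ_F²`. -/
noncomputable def qVar (F : ℝ → ℝ) : ℝ :=
  (∫ q in Set.Ioo (0:ℝ) 1, (quantile F q) ^ 2) - (qMean F) ^ 2

/-- The standard deviation computed from the quantile function. -/
noncomputable def qStdDev (F : ℝ → ℝ) : ℝ := Real.sqrt (qVar F)

/-- The Pearson correlation of the points in the quantile-quantile plot of two cdfs:
`ρ^{A,B} = (∫₀¹ Q_A Q_B − μ_A μ_B) / (σ_A σ_B)`. -/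
noncomputable def qqCorr (A B : ℝ → ℝ) : ℝ :=
  ((∫ q in Set.Ioo (0:ℝ) 1, quantile A q * quantile B q) - qMean A * qMean B) /
    (qStdDev A * qStdDev B)


lemma quantile_monoOn {F : ℝ → ℝ} (hF : IsCDF F) :
    MonotoneOn (quantile F) (Set.Ioo 0 1) := by
  obtain ⟨hmono, -, hbot, htop⟩ := hF
  intro q hq q' hq' hqq'
  have hne : {x : ℝ | q' ≤ F x}.Nonempty := by
    have : ∀ᶠ x in atTop, F x ∈ Set.Ioi q' := htop.eventually (Ioi_mem_nhds hq'.2)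
    obtain ⟨x, hx⟩ := this.exists
    exact ⟨x, show q' ≤ F x from le_of_lt hx⟩
  have hbdd : BddBelow {x : ℝ | q ≤ F x} := by
    have : ∀ᶠ x in atBot, F x ∈ Set.Iio q := hbot.eventually (Iio_mem_nhds hq.1)
    obtain ⟨x, hx⟩ := this.exists
    refine ⟨x, fun y hy => ?_⟩
    by_contra h
    push_neg at h
    exact absurd (le_trans hy (hmono h.le)) (not_le.mpr hx)
  exact csInf_le_csInf hbdd hne (fun x hx => le_trans hqq' hx)

lemma quantile_aesm {F : ℝ → ℝ} (hF : IsCDF F) :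
    AEStronglyMeasurable (quantile F) (volume.restrict (Set.Ioo (0:ℝ) 1)) :=
  (aemeasurable_restrict_of_monotoneOn measurableSet_Ioo
    (quantile_monoOn hF)).aestronglyMeasurable

lemma quantile_integrable {F : ℝ → ℝ} (hF : IsCDF F)
    (hF2 : IntegrableOn (fun q => (quantile F q) ^ 2) (Set.Ioo (0:ℝ) 1)) :
    IntegrableOn (quantile F) (Set.Ioo (0:ℝ) 1) := by
  have hconst : IntegrableOn (fun _ : ℝ => (1:ℝ)) (Set.Ioo (0:ℝ) 1) :=
    (integrableOn_const_iff).mpr (Or.inr (by simp [Real.volume_Ioo]))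
  have hsum : IntegrableOn (fun q : ℝ => 1 + (quantile F q) ^ 2) (Set.Ioo (0:ℝ) 1) :=
    hconst.add hF2
  refine hsum.mono' (quantile_aesm hF) (Filter.Eventually.of_forall fun q => ?_)
  rw [Real.norm_eq_abs]
  rcases le_or_gt (|quantile F q|) 1 with h | h
  · nlinarith [sq_nonneg (quantile F q)]
  · calc |quantile F q| ≤ |quantile F q| ^ 2 := by nlinarith
      _ = (quantile F q) ^ 2 := sq_abs _
      _ ≤ 1 + (quantile F q) ^ 2 := by linarith

theorem w2_sq_eq_mean_std_corr'_aux : True := trivial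

/-- **The squared 2-Wasserstein distance via means, standard deviations and the
QQ-correlation** (Irpino–Verde): for cdfs `A`, `B` with finite second moments and
positive standard deviations,
`W₂²(A,B) = (μ_A − μ_B)² + (σ_A − σ_B)² + 2 σ_A σ_B (1 − ρ^{A,B})`. -/
theorem w2_sq_eq_mean_std_corr (A B : ℝ → ℝ) (hA : IsCDF A) (hB : IsCDF B)
    (hA2 : IntegrableOn (fun q => (quantile A q) ^ 2) (Set.Ioo (0:ℝ) 1))
    (hB2 : IntegrableOn (fun q => (quantile B q) ^ 2) (Set.Ioo (0:ℝ) 1))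
    (hσA : 0 < qStdDev A) (hσB : 0 < qStdDev B) :
    (∫ q in Set.Ioo (0:ℝ) 1, (quantile A q - quantile B q) ^ 2) =
      (qMean A - qMean B) ^ 2 + (qStdDev A - qStdDev B) ^ 2 +
        2 * qStdDev A * qStdDev B * (1 - qqCorr A B) := by
  have hmA := quantile_integrable hA hA2
  have hmB := quantile_integrable hB hB2
  have hAB : IntegrableOn (fun q => quantile A q * quantile B q) (Set.Ioo (0:ℝ) 1) := by
    have hsum : IntegrableOn
        (fun q : ℝ => 1/2 * ((quantile A q) ^ 2 + (quantile B q) ^ 2)) (Set.Ioo (0:ℝ) 1) :=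
      (hA2.add hB2).const_mul (1/2)
    refine hsum.mono' ((quantile_aesm hA).mul (quantile_aesm hB))
      (Filter.Eventually.of_forall fun q => ?_)
    rw [Real.norm_eq_abs, abs_mul]
    have := sq_nonneg (|quantile A q| - |quantile B q|)
    have hA' : |quantile A q| ^ 2 = (quantile A q) ^ 2 := sq_abs _
    have hB' : |quantile B q| ^ 2 = (quantile B q) ^ 2 := sq_abs _
    nlinarith [abs_nonneg (quantile A q), abs_nonneg (quantile B q)]
  have hexp : (∫ q in Set.Ioo (0:ℝ) 1, (quantile A q - quantile B q) ^ 2) =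
      (∫ q in Set.Ioo (0:ℝ) 1, (quantile A q) ^ 2)
      - 2 * (∫ q in Set.Ioo (0:ℝ) 1, quantile A q * quantile B q)
      + (∫ q in Set.Ioo (0:ℝ) 1, (quantile B q) ^ 2) := by
    have h2AB : IntegrableOn (fun q : ℝ => 2 * (quantile A q * quantile B q))
        (Set.Ioo (0:ℝ) 1) := hAB.const_mul 2
    have hf : IntegrableOn
        (fun q : ℝ => quantile A q ^ 2 - 2 * (quantile A q * quantile B q))
        (Set.Ioo (0:ℝ) 1) := hA2.sub h2AB
    rw [integral_congr_ae (g := fun q : ℝ =>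
        quantile A q ^ 2 - 2 * (quantile A q * quantile B q) + quantile B q ^ 2)
      (Filter.Eventually.of_forall fun q => by ring),
      integral_add hf hB2, integral_sub hA2 h2AB, integral_const_mul]
  have hvA : qStdDev A ^ 2 = qVar A := Real.sq_sqrt (Real.sqrt_pos.mp hσA).le
  have hvB : qStdDev B ^ 2 = qVar B := Real.sq_sqrt (Real.sqrt_pos.mp hσB).le
  have hne : qStdDev A * qStdDev B ≠ 0 := (mul_pos hσA hσB).ne'
  rw [hexp, qqCorr]
  have hIA : (∫ q in Set.Ioo (0:ℝ) 1, (quantile A q) ^ 2) = qVar A + qMean A ^ 2 := by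
    rw [qVar]; ring
  have hIB : (∫ q in Set.Ioo (0:ℝ) 1, (quantile B q) ^ 2) = qVar B + qMean B ^ 2 := by
    rw [qVar]; ring
  rw [hIA, hIB, ← hvA, ← hvB]
  field_simp
  ring
end

section
/- Let Φ be the cumulative distribution function of the standard Gaussian distribution N(0,1) on ℝ, and let Q(q) = inf{x ∈ ℝ : Φ(x) ≥ q} for q ∈ (0,1) be its quantile function. Then ∫₀¹ Q(q) dq = 0, ∫₀¹ Q(q)² dq = 1, and consequently for all μ₁, μ₂ ∈ ℝ and σ₁, σ₂ ≥ 0, ∫₀¹ ((μ₁ + σ₁ Q(q)) − (μ₂ + σ₂ Q(q)))² dq = (μ₁ − μ₂)² + (σ₁ − σ₂)². Since q ↦ μ + σ Q(q) is the quantile function of the Gaussian distribution N(μ, σ²) for σ > 0, this says that the squared 2-Wasserstein distance between N(μ₁, σ₁²) and N(μ₂, σ₂²) equals (μ₁ − μ₂)² + (σ₁ − σ₂)². -/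
open MeasureTheory ProbabilityTheory Filter Set

/-- The cdf of a measure on `ℝ`: `t ↦ ν(−∞, t]`. -/
noncomputable def cdfOf (ν : Measure ℝ) (t : ℝ) : ℝ := (ν (Set.Iic t)).toReal

open Real Topology


namespace GaussAux


noncomputable def p : ℝ → ℝ := gaussianPDFReal 0 1
noncomputable def Φ : ℝ → ℝ := cdfOf (gaussianReal 0 1)

lemma p_eq : p = fun x => (√(2*π))⁻¹ * rexp (-(2⁻¹) * x^2) := by
  ext x
  rw [p, gaussianPDFReal]
  congr 1
  · norm_num
  · congr 1
    push_cast
    ring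

lemma p_pos (x : ℝ) : 0 < p x := gaussianPDFReal_pos 0 1 x (by norm_num)
lemma p_cont : Continuous p := by
  rw [p_eq]; continuity
lemma p_int : Integrable p := integrable_gaussianPDFReal 0 1
lemma p_total : ∫ x, p x = 1 := integral_gaussianPDFReal_eq_one 0 (by norm_num)

lemma Φ_eq (t : ℝ) : Φ t = ∫ x in Iic t, p x := by
  rw [Φ, cdfOf, gaussianReal_apply_eq_integral 0 (by norm_num), ENNReal.toReal_ofReal
    (setIntegral_nonneg measurableSet_Iic fun x _ => gaussianPDFReal_nonneg 0 1 x)]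
  rfl

lemma setInt_pos {s : Set ℝ} (hs : MeasurableSet s) (h0 : volume s ≠ 0) :
    0 < ∫ x in s, p x := by
  rw [setIntegral_pos_iff_support_of_nonneg_ae (ae_of_all _ fun x => (p_pos x).le)
    p_int.integrableOn]
  have : Function.support p = univ := eq_univ_of_forall fun x => (p_pos x).ne'
  rw [this, univ_inter]
  exact h0.bot_lt

lemma Φ_hasDeriv (b : ℝ) : HasDerivAt Φ (p b) b := by
  have hΦ : Φ = fun t => (∫ x in (0:ℝ)..t, p x) + Φ 0 := by
    ext t
    rw [Φ_eq t, Φ_eq 0, ← intervalIntegral.integral_Iic_sub_Iic p_int.integrableOn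
      p_int.integrableOn]
    ring
  rw [hΦ]
  exact (intervalIntegral.integral_hasDerivAt_right p_int.intervalIntegrable
    p_cont.stronglyMeasurable.stronglyMeasurableAtFilter p_cont.continuousAt).add_const _

lemma Φ_mono : StrictMono Φ :=
  strictMono_of_deriv_pos fun x => by rw [(Φ_hasDeriv x).deriv]; exact p_pos x

lemma Φ_cont : Continuous Φ := by
  have : Differentiable ℝ Φ := fun x => (Φ_hasDeriv x).differentiableAt
  exact this.continuous

lemma Φ_pos (t : ℝ) : 0 < Φ t := by
  rw [Φ_eq]
  exact setInt_pos measurableSet_Iic (by simp)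

lemma Φ_lt_one (t : ℝ) : Φ t < 1 := by
  have h := intervalIntegral.integral_Iic_add_Ioi (b := t) p_int.integrableOn p_int.integrableOn
  rw [p_total] at h
  have h2 : 0 < ∫ x in Ioi t, p x := setInt_pos measurableSet_Ioi (by simp)
  rw [← Φ_eq] at h
  linarith

lemma Φ_tendsto_atTop : Tendsto Φ atTop (𝓝 1) := by
  have h := tendsto_measure_Iic_atTop (gaussianReal 0 1)
  rw [measure_univ] at h
  have h2 := (ENNReal.tendsto_toReal ENNReal.one_ne_top).comp h
  rw [ENNReal.toReal_one] at h2; exact h2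

lemma Φ_tendsto_atBot : Tendsto Φ atBot (𝓝 0) := by
  have h1 : Tendsto (fun t : ℝ => ((gaussianReal 0 1) (Ici (t+1))).toReal) atBot (𝓝 1) := by
    have h := tendsto_measure_Ici_atBot (gaussianReal 0 1)
    rw [measure_univ] at h
    have h2 := (ENNReal.tendsto_toReal ENNReal.one_ne_top).comp h
    simp only [ENNReal.toReal_one] at h2
    exact h2.comp (tendsto_atBot_add_const_right _ 1 tendsto_id)
  have hle : ∀ t : ℝ, Φ t ≤ 1 - ((gaussianReal 0 1) (Ici (t+1))).toReal := by
    intro t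
    have hd : Disjoint (Iic t) (Ici (t+1)) := by
      rw [Set.disjoint_left]
      intro x hx hx2
      simp only [mem_Iic, mem_Ici] at hx hx2
      linarith
    have hun : (gaussianReal 0 1) (Iic t) + (gaussianReal 0 1) (Ici (t+1)) ≤ 1 := by
      rw [← measure_union hd measurableSet_Ici]
      rw [← measure_univ (μ := gaussianReal 0 1)]
      exact measure_mono (subset_univ _)
    have hsum : Φ t + ((gaussianReal 0 1) (Ici (t+1))).toReal
        = ((gaussianReal 0 1) (Iic t) + (gaussianReal 0 1) (Ici (t+1))).toReal := by
      rw [ENNReal.toReal_add (measure_ne_top _ _) (measure_ne_top _ _)]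
      rfl
    have hmono := ENNReal.toReal_mono (by simp) hun
    rw [ENNReal.toReal_one] at hmono
    linarith [hsum, hmono]
  have hlow : ∀ t : ℝ, (0:ℝ) ≤ Φ t := fun t => (Φ_pos t).le
  have hup : Tendsto (fun t : ℝ => 1 - ((gaussianReal 0 1) (Ici (t+1))).toReal) atBot (𝓝 0) := by
    have := (tendsto_const_nhds (x := (1:ℝ)) (f := atBot (α := ℝ))).sub h1
    simpa using this
  exact tendsto_of_tendsto_of_tendsto_of_le_of_le tendsto_const_nhds hup hlow hle

lemma Φ_range : range Φ = Ioo 0 1 := by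
  apply Subset.antisymm
  · rintro _ ⟨t, rfl⟩; exact ⟨Φ_pos t, Φ_lt_one t⟩
  · rintro q ⟨hq0, hq1⟩
    obtain ⟨a, ha⟩ := (Φ_tendsto_atBot.eventually_lt_const hq0).exists
    obtain ⟨b, hb⟩ := (Φ_tendsto_atTop.eventually_const_lt hq1).exists
    have hab : a ≤ b := (Φ_mono.lt_iff_lt.mp (ha.trans hb)).le
    have := intermediate_value_Icc hab Φ_cont.continuousOn
    obtain ⟨x, _, hx⟩ := this ⟨ha.le, hb.le⟩
    exact ⟨x, hx⟩

lemma quantile_Φ (x : ℝ) : quantile Φ (Φ x) = x := by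
  have : {y : ℝ | Φ x ≤ Φ y} = Ici x := by
    ext y; exact Φ_mono.le_iff_le
  rw [quantile, this, csInf_Ici]

lemma key (g : ℝ → ℝ) : ∫ q in Ioo (0:ℝ) 1, g q = ∫ x, p x * g (Φ x) := by
  rw [← Φ_range, ← image_univ,
    MeasureTheory.integral_image_eq_integral_abs_deriv_smul MeasurableSet.univ
      (fun x _ => (Φ_hasDeriv x).hasDerivWithinAt) (Φ_mono.injective.injOn) g,
    MeasureTheory.Measure.restrict_univ]
  congr 1
  ext x
  rw [abs_of_pos (p_pos x), smul_eq_mul]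



lemma intExp : Integrable (fun x : ℝ => rexp (-(2⁻¹:ℝ) * x^2)) :=
  integrable_exp_neg_mul_sq (by norm_num)

lemma int1 : Integrable (fun x : ℝ => x * rexp (-(2⁻¹:ℝ) * x^2)) :=
  integrable_mul_exp_neg_mul_sq (by norm_num)

lemma int2 : Integrable (fun x : ℝ => x^2 * rexp (-(2⁻¹:ℝ) * x^2)) := by
  refine ((integrable_exp_neg_mul_sq (show (0:ℝ) < 4⁻¹ by norm_num)).const_mul 4).mono'
    (Continuous.aestronglyMeasurable (by continuity)) (ae_of_all _ fun x => ?_)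
  rw [norm_eq_abs, abs_of_nonneg (by positivity)]
  have key : x^2 ≤ 4 * rexp ((4⁻¹:ℝ)*x^2) := by
    have h := Real.add_one_le_exp ((4⁻¹:ℝ)*x^2)
    nlinarith [Real.exp_pos ((4⁻¹:ℝ)*x^2)]
  calc x^2 * rexp (-(2⁻¹:ℝ)*x^2) ≤ (4 * rexp ((4⁻¹:ℝ)*x^2)) * rexp (-(2⁻¹:ℝ)*x^2) :=
        mul_le_mul_of_nonneg_right key (Real.exp_pos _).le
    _ = 4 * rexp (-(4⁻¹:ℝ)*x^2) := by
        rw [mul_assoc, ← Real.exp_add]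
        ring_nf

lemma I1 : ∫ x : ℝ, x * rexp (-(2⁻¹:ℝ) * x^2) = 0 := by
  have h := MeasureTheory.integral_neg_eq_self (fun x : ℝ => x * rexp (-(2⁻¹:ℝ) * x^2)) volume
  have e : (fun x : ℝ => (fun x : ℝ => x * rexp (-(2⁻¹:ℝ) * x^2)) (-x))
      = fun x : ℝ => -(x * rexp (-(2⁻¹:ℝ) * x^2)) := by
    ext x; simp only [neg_sq]; ring
  rw [e, integral_neg] at h
  linarith

lemma IExp : ∫ x : ℝ, rexp (-(2⁻¹:ℝ) * x^2) = √(2*π) := by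
  rw [integral_gaussian]
  congr 1
  field_simp

lemma I2exp : ∫ x : ℝ, x * (x * rexp (-(2⁻¹:ℝ) * x^2)) = √(2*π) := by
  have hu : ∀ x : ℝ, HasDerivAt (fun y : ℝ => y) 1 x := fun x => hasDerivAt_id x
  have hv : ∀ x : ℝ, HasDerivAt (fun y : ℝ => -rexp (-(2⁻¹:ℝ) * y^2))
      (x * rexp (-(2⁻¹:ℝ)*x^2)) x := by
    intro x
    have h1 : HasDerivAt (fun y : ℝ => -(2⁻¹:ℝ) * y^2) (-(2⁻¹:ℝ) * (2*x^1)) x :=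
      (hasDerivAt_pow 2 x).const_mul _
    have h3 := (h1.exp).neg
    exact h3.congr_deriv (by ring)
  have e1 : ((fun y : ℝ => y) * fun x : ℝ => x * rexp (-(2⁻¹:ℝ)*x^2))
      = fun x : ℝ => x^2 * rexp (-(2⁻¹:ℝ)*x^2) := by
    ext x; simp only [Pi.mul_apply]; ring
  have e2 : ((fun _ : ℝ => (1:ℝ)) * fun x : ℝ => -rexp (-(2⁻¹:ℝ)*x^2))
      = fun x : ℝ => -rexp (-(2⁻¹:ℝ)*x^2) := by
    ext x; simp
  have e3 : ((fun y : ℝ => y) * fun x : ℝ => -rexp (-(2⁻¹:ℝ)*x^2))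
      = fun x : ℝ => -(x * rexp (-(2⁻¹:ℝ)*x^2)) := by
    ext x; simp only [Pi.mul_apply]; ring
  have huv' : Integrable ((fun y : ℝ => y) * fun x : ℝ => x * rexp (-(2⁻¹:ℝ)*x^2)) := by
    rw [e1]; exact int2
  have hu'v : Integrable ((fun _ : ℝ => (1:ℝ)) * fun x : ℝ => -rexp (-(2⁻¹:ℝ)*x^2)) := by
    rw [e2]; exact intExp.neg
  have huv : Integrable ((fun y : ℝ => y) * fun x : ℝ => -rexp (-(2⁻¹:ℝ)*x^2)) := by
    rw [e3]; exact int1.neg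
  have h := MeasureTheory.integral_mul_deriv_eq_deriv_mul_of_integrable (fun x _ => hu x) (fun x _ => hv x) huv' hu'v huv
  rw [h]
  have : (fun x : ℝ => (1:ℝ) * -rexp (-(2⁻¹:ℝ)*x^2)) = fun x : ℝ => -rexp (-(2⁻¹:ℝ)*x^2) := by
    ext x; ring
  rw [show (∫ x : ℝ, (1:ℝ) * -rexp (-(2⁻¹:ℝ)*x^2)) = ∫ x : ℝ, -rexp (-(2⁻¹:ℝ)*x^2) by rw [this],
    integral_neg, IExp]
  ring


lemma sqrt2pi_pos : (0:ℝ) < √(2*π) := Real.sqrt_pos.2 (by positivity)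

lemma pI0 : ∫ x, p x = 1 := p_total

lemma pInt : Integrable p := p_int

lemma pxInt : Integrable (fun x => p x * x) := by
  have e : (fun x => p x * x) = fun x => (√(2*π))⁻¹ * (x * rexp (-(2⁻¹:ℝ) * x^2)) := by
    rw [p_eq]; ext x; ring
  rw [e]; exact int1.const_mul _

lemma px2Int : Integrable (fun x => p x * x^2) := by
  have e : (fun x => p x * x^2) = fun x => (√(2*π))⁻¹ * (x^2 * rexp (-(2⁻¹:ℝ) * x^2)) := by
    rw [p_eq]; ext x; ring
  rw [e]; exact int2.const_mul _

lemma pI1 : ∫ x, p x * x = 0 := by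
  have e : (fun x => p x * x) = fun x => (√(2*π))⁻¹ * (x * rexp (-(2⁻¹:ℝ) * x^2)) := by
    rw [p_eq]; ext x; ring
  rw [e, integral_const_mul, I1, mul_zero]

lemma pI2 : ∫ x, p x * x^2 = 1 := by
  have e : (fun x => p x * x^2) = fun x => (√(2*π))⁻¹ * (x * (x * rexp (-(2⁻¹:ℝ) * x^2))) := by
    rw [p_eq]; ext x; ring
  rw [e, integral_const_mul, I2exp, inv_mul_cancel₀ sqrt2pi_pos.ne']

lemma affine_sq (a b : ℝ) : ∫ x, p x * (a + b * x)^2 = a^2 + b^2 := by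
  have e : (fun x => p x * (a + b * x)^2)
      = fun x => a^2 * p x + (2*a*b) * (p x * x) + b^2 * (p x * x^2) := by
    ext x; ring
  have hfg : Integrable (fun x => a^2 * p x + 2*a*b*(p x * x)) :=
    (pInt.const_mul _).add (pxInt.const_mul _)
  have hh : Integrable (fun x => b^2 * (p x * x^2)) := px2Int.const_mul _
  rw [e, integral_add hfg hh, integral_add (pInt.const_mul _) (pxInt.const_mul _),
    integral_const_mul, integral_const_mul, integral_const_mul, pI0, pI1, pI2]
  ring

end GaussAux

/-- **Moments of the standard Gaussian quantile function, and the 2-Wasserstein distance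
between Gaussians.** Let `Φ` be the cdf of `N(0,1)` and `Q` its quantile function. Then
`∫₀¹ Q = 0`, `∫₀¹ Q² = 1`, and for all `μ₁ μ₂ ∈ ℝ`, `σ₁ σ₂ ≥ 0`,
`∫₀¹ ((μ₁ + σ₁ Q(q)) − (μ₂ + σ₂ Q(q)))² dq = (μ₁ − μ₂)² + (σ₁ − σ₂)²`;
i.e. `W₂²(N(μ₁,σ₁²), N(μ₂,σ₂²)) = (μ₁ − μ₂)² + (σ₁ − σ₂)²`. -/
theorem gaussian_quantile_moments_and_w2 :
    (∫ q in Set.Ioo (0:ℝ) 1, quantile (cdfOf (gaussianReal 0 1)) q) = 0 ∧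
    (∫ q in Set.Ioo (0:ℝ) 1, (quantile (cdfOf (gaussianReal 0 1)) q) ^ 2) = 1 ∧
    ∀ (μ₁ μ₂ σ₁ σ₂ : ℝ), 0 ≤ σ₁ → 0 ≤ σ₂ →
      (∫ q in Set.Ioo (0:ℝ) 1,
          ((μ₁ + σ₁ * quantile (cdfOf (gaussianReal 0 1)) q) -
            (μ₂ + σ₂ * quantile (cdfOf (gaussianReal 0 1)) q)) ^ 2) =
        (μ₁ - μ₂) ^ 2 + (σ₁ - σ₂) ^ 2 := by
  have hΦ : cdfOf (gaussianReal 0 1) = GaussAux.Φ := rfl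
  rw [hΦ]
  refine ⟨?_, ?_, ?_⟩
  · rw [GaussAux.key (fun q => quantile GaussAux.Φ q)]
    simp_rw [GaussAux.quantile_Φ]
    exact GaussAux.pI1
  · rw [GaussAux.key (fun q => (quantile GaussAux.Φ q)^2)]
    simp_rw [GaussAux.quantile_Φ]
    exact GaussAux.pI2
  · intro μ₁ μ₂ σ₁ σ₂ _ _
    rw [GaussAux.key (fun q => ((μ₁ + σ₁ * quantile GaussAux.Φ q)
      - (μ₂ + σ₂ * quantile GaussAux.Φ q))^2)]
    simp_rw [GaussAux.quantile_Φ]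
    have e : (fun x => GaussAux.p x * ((μ₁ + σ₁ * x) - (μ₂ + σ₂ * x))^2)
        = fun x => GaussAux.p x * ((μ₁ - μ₂) + (σ₁ - σ₂) * x)^2 := by
      ext x; ring
    rw [e, GaussAux.affine_sq]
end

section
/- Let F₁ and F₂ be cumulative distribution functions on ℝ with quantile functions Q₁ and Q₂, and suppose ∫_ℝ |F₁(t) − F₂(t)| dt < ∞. Then ∫₀¹ |Q₁(q) − Q₂(q)| dq = ∫_ℝ |F₁(t) − F₂(t)| dt; that is, the two standard formulas for the 1-Wasserstein distance between distributions on ℝ coincide. -/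
open MeasureTheory Filter Set

lemma IsCDF.nonneg {F : ℝ → ℝ} (h : IsCDF F) (x : ℝ) : 0 ≤ F x :=
  le_of_tendsto h.2.2.1 (eventually_atBot.2 ⟨x, fun _ hy => h.1 hy⟩)

lemma IsCDF.le_one {F : ℝ → ℝ} (h : IsCDF F) (x : ℝ) : F x ≤ 1 :=
  ge_of_tendsto h.2.2.2 (eventually_atTop.2 ⟨x, fun _ hy => h.1 hy⟩)

lemma IsCDF.le_iff {F : ℝ → ℝ} (h : IsCDF F) {q : ℝ} (hq0 : 0 < q) (hq1 : q < 1) (t : ℝ) :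
    q ≤ F t ↔ quantile F q ≤ t := by
  have hne : {x : ℝ | q ≤ F x}.Nonempty := (h.2.2.2.eventually (eventually_ge_nhds hq1)).exists
  obtain ⟨x₀, hx₀⟩ := eventually_atBot.1 (h.2.2.1.eventually (eventually_lt_nhds hq0))
  have hbdd : BddBelow {x : ℝ | q ≤ F x} := by
    refine ⟨x₀, fun s hs => ?_⟩
    by_contra hc
    exact absurd hs (not_le.2 (hx₀ s (le_of_lt (not_le.1 hc))))
  constructor
  · exact fun ht => csInf_le hbdd ht
  · intro ht
    have key : ∀ x, quantile F q < x → q ≤ F x := by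
      intro x hx
      obtain ⟨s, hs, hsx⟩ := (csInf_lt_iff hbdd hne).1 hx
      exact hs.trans (h.1 hsx.le)
    have hQ : q ≤ F (quantile F q) := by
      have hcont : Tendsto F (nhdsWithin (quantile F q) (Set.Ioi (quantile F q)))
          (nhds (F (quantile F q))) :=
        (h.2.1 (quantile F q)).mono_left (nhdsWithin_mono _ Ioi_subset_Ici_self)
      exact ge_of_tendsto hcont (eventually_nhdsWithin_of_forall fun x hx => key x hx)
    exact hQ.trans (h.1 ht)

lemma sect_t_vol {F₁ F₂ : ℝ → ℝ} (h₁ : IsCDF F₁) (h₂ : IsCDF F₂) {q : ℝ}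
    (hq : q ∈ Ioo (0:ℝ) 1) :
    volume {t : ℝ | (q ≤ F₁ t ∧ ¬ q ≤ F₂ t) ∨ (q ≤ F₂ t ∧ ¬ q ≤ F₁ t)} =
      ENNReal.ofReal |quantile F₁ q - quantile F₂ q| := by
  have e : {t : ℝ | (q ≤ F₁ t ∧ ¬ q ≤ F₂ t) ∨ (q ≤ F₂ t ∧ ¬ q ≤ F₁ t)} =
      Ico (quantile F₁ q) (quantile F₂ q) ∪ Ico (quantile F₂ q) (quantile F₁ q) := by
    ext t
    simp only [mem_setOf_eq, h₁.le_iff hq.1 hq.2, h₂.le_iff hq.1 hq.2, mem_union, mem_Ico,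
      not_le]
  rw [e]
  rcases le_total (quantile F₁ q) (quantile F₂ q) with hle | hle
  · rw [Ico_eq_empty (not_lt.2 hle), union_empty, Real.volume_Ico,
      abs_of_nonpos (by linarith), neg_sub]
  · rw [Ico_eq_empty (not_lt.2 hle), empty_union, Real.volume_Ico,
      abs_of_nonneg (by linarith)]

lemma sect_q_vol {F₁ F₂ : ℝ → ℝ} (h₁ : IsCDF F₁) (h₂ : IsCDF F₂) (t : ℝ) :
    volume {q : ℝ | q ∈ Ioo (0:ℝ) 1 ∧
        ((q ≤ F₁ t ∧ ¬ q ≤ F₂ t) ∨ (q ≤ F₂ t ∧ ¬ q ≤ F₁ t))} =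
      ENNReal.ofReal |F₁ t - F₂ t| := by
  have key : ∀ a b : ℝ, 0 ≤ a → b ≤ 1 → a ≤ b →
      volume (Ioo (0:ℝ) 1 ∩ Ioc a b) = ENNReal.ofReal (b - a) := by
    intro a b ha hb hab
    refine le_antisymm ?_ ?_
    · calc volume (Ioo (0:ℝ) 1 ∩ Ioc a b) ≤ volume (Ioc a b) :=
            measure_mono inter_subset_right
        _ = ENNReal.ofReal (b - a) := Real.volume_Ioc
    · calc ENNReal.ofReal (b - a) = volume (Ioo a b) := Real.volume_Ioo.symm
        _ ≤ volume (Ioo (0:ℝ) 1 ∩ Ioc a b) := by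
            exact measure_mono fun x hx => ⟨⟨lt_of_le_of_lt ha hx.1, lt_of_lt_of_le hx.2 hb⟩,
              ⟨hx.1, hx.2.le⟩⟩
  have e : {q : ℝ | q ∈ Ioo (0:ℝ) 1 ∧
        ((q ≤ F₁ t ∧ ¬ q ≤ F₂ t) ∨ (q ≤ F₂ t ∧ ¬ q ≤ F₁ t))} =
      Ioo (0:ℝ) 1 ∩ (Ioc (F₂ t) (F₁ t) ∪ Ioc (F₁ t) (F₂ t)) := by
    ext q
    simp only [mem_setOf_eq, mem_inter_iff, mem_union, mem_Ioc, not_le]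
    tauto
  rw [e]
  rcases le_total (F₁ t) (F₂ t) with hle | hle
  · rw [Ioc_eq_empty (not_lt.2 hle), empty_union, key _ _ (h₁.nonneg t) (h₂.le_one t) hle,
      abs_of_nonpos (by linarith), neg_sub]
  · rw [Ioc_eq_empty (not_lt.2 hle), union_empty, key _ _ (h₂.nonneg t) (h₁.le_one t) hle,
      abs_of_nonneg (by linarith)]

/-- **The two standard formulas for the 1-Wasserstein distance on `ℝ` coincide:**
for cdfs `F₁`, `F₂` with `∫ |F₁ − F₂| < ∞`,
`∫₀¹ |Q₁(q) − Q₂(q)| dq = ∫_ℝ |F₁(t) − F₂(t)| dt`. -/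
theorem integral_abs_quantile_sub_eq_integral_abs_cdf_sub
    (F₁ F₂ : ℝ → ℝ) (h₁ : IsCDF F₁) (h₂ : IsCDF F₂)
    (hint : Integrable (fun t => |F₁ t - F₂ t|)) :
    (∫ q in Set.Ioo (0:ℝ) 1, |quantile F₁ q - quantile F₂ q|) =
      ∫ t, |F₁ t - F₂ t| := by
  have hm₁ : Measurable F₁ := h₁.1.measurable
  have hm₂ : Measurable F₂ := h₂.1.measurable
  set A : Set (ℝ × ℝ) := {p : ℝ × ℝ | p.1 ∈ Ioo (0:ℝ) 1 ∧
      ((p.1 ≤ F₁ p.2 ∧ ¬ p.1 ≤ F₂ p.2) ∨ (p.1 ≤ F₂ p.2 ∧ ¬ p.1 ≤ F₁ p.2))} with hA_def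
  have hB₁ : MeasurableSet {p : ℝ × ℝ | p.1 ≤ F₁ p.2} :=
    measurableSet_le measurable_fst (hm₁.comp measurable_snd)
  have hB₂ : MeasurableSet {p : ℝ × ℝ | p.1 ≤ F₂ p.2} :=
    measurableSet_le measurable_fst (hm₂.comp measurable_snd)
  have h0 : MeasurableSet {p : ℝ × ℝ | p.1 ∈ Ioo (0:ℝ) 1} :=
    measurable_fst measurableSet_Ioo
  have hA : MeasurableSet A := by
    have : A = {p : ℝ × ℝ | p.1 ∈ Ioo (0:ℝ) 1} ∩
        (({p : ℝ × ℝ | p.1 ≤ F₁ p.2} ∩ {p : ℝ × ℝ | p.1 ≤ F₂ p.2}ᶜ) ∪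
         ({p : ℝ × ℝ | p.1 ≤ F₂ p.2} ∩ {p : ℝ × ℝ | p.1 ≤ F₁ p.2}ᶜ)) := rfl
    rw [this]
    exact h0.inter ((hB₁.inter hB₂.compl).union (hB₂.inter hB₁.compl))
  -- Tonelli
  have swap : (∫⁻ q, volume {t : ℝ | (q, t) ∈ A}) = ∫⁻ t, volume {q : ℝ | (q, t) ∈ A} := by
    have hind : Measurable (A.indicator (1 : ℝ × ℝ → ENNReal)) := measurable_one.indicator hA
    calc (∫⁻ q, volume {t : ℝ | (q, t) ∈ A})
        = ∫⁻ q, ∫⁻ t, A.indicator (1 : ℝ × ℝ → ENNReal) (q, t) := by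
          refine lintegral_congr fun q => ?_
          have : (fun t => A.indicator (1 : ℝ × ℝ → ENNReal) (q, t)) =
              ({t : ℝ | (q, t) ∈ A}).indicator (1 : ℝ → ENNReal) := by
            funext t
            by_cases h : (q, t) ∈ A <;> simp [Set.indicator, h]
          rw [this]
          exact (lintegral_indicator_one (hA.preimage (measurable_prodMk_left)) :
            (∫⁻ t, ({t : ℝ | (q, t) ∈ A}).indicator (1 : ℝ → ENNReal) t) =
              volume {t : ℝ | (q, t) ∈ A}).symm
      _ = ∫⁻ t, ∫⁻ q, A.indicator (1 : ℝ × ℝ → ENNReal) (q, t) :=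
          lintegral_lintegral_swap (hind.aemeasurable)
      _ = ∫⁻ t, volume {q : ℝ | (q, t) ∈ A} := by
          refine lintegral_congr fun t => ?_
          have : (fun q => A.indicator (1 : ℝ × ℝ → ENNReal) (q, t)) =
              ({q : ℝ | (q, t) ∈ A}).indicator (1 : ℝ → ENNReal) := by
            funext q
            by_cases h : (q, t) ∈ A <;> simp [Set.indicator, h]
          rw [this]
          exact (lintegral_indicator_one (hA.preimage (measurable_prodMk_right)) :
            (∫⁻ q, ({q : ℝ | (q, t) ∈ A}).indicator (1 : ℝ → ENNReal) q) =
              volume {q : ℝ | (q, t) ∈ A})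
  have hsect_t : (∫⁻ q, volume {t : ℝ | (q, t) ∈ A}) =
      ∫⁻ q in Ioo (0:ℝ) 1, ENNReal.ofReal |quantile F₁ q - quantile F₂ q| := by
    rw [← lintegral_indicator measurableSet_Ioo]
    refine lintegral_congr fun q => ?_
    by_cases hq : q ∈ Ioo (0:ℝ) 1
    · have : {t : ℝ | (q, t) ∈ A} =
          {t : ℝ | (q ≤ F₁ t ∧ ¬ q ≤ F₂ t) ∨ (q ≤ F₂ t ∧ ¬ q ≤ F₁ t)} := by
        ext t
        simp only [hA_def, mem_setOf_eq, hq, true_and]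
      rw [this, sect_t_vol h₁ h₂ hq, indicator_of_mem hq]
    · have : {t : ℝ | (q, t) ∈ A} = (∅ : Set ℝ) := by
        ext t
        simp only [hA_def, mem_setOf_eq, hq, false_and, mem_empty_iff_false]
      rw [this, measure_empty, indicator_of_notMem hq]
  have hsect_q : (∫⁻ t, volume {q : ℝ | (q, t) ∈ A}) =
      ∫⁻ t, ENNReal.ofReal |F₁ t - F₂ t| := by
    refine lintegral_congr fun t => ?_
    exact sect_q_vol h₁ h₂ t
  have key : (∫⁻ q in Ioo (0:ℝ) 1, ENNReal.ofReal |quantile F₁ q - quantile F₂ q|) =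
      ∫⁻ t, ENNReal.ofReal |F₁ t - F₂ t| := by
    rw [← hsect_t, swap, hsect_q]
  -- convert the right-hand side
  have hRint : ENNReal.ofReal (∫ t, |F₁ t - F₂ t|) = ∫⁻ t, ENNReal.ofReal |F₁ t - F₂ t| :=
    ofReal_integral_eq_lintegral_ofReal hint (Eventually.of_forall fun t => abs_nonneg _)
  -- measurability of the quantile difference
  have hmono : ∀ (F : ℝ → ℝ), IsCDF F → MonotoneOn (quantile F) (Ioo (0:ℝ) 1) := by
    intro F hF a ha b hb hab
    rw [← hF.le_iff ha.1 ha.2]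
    exact hab.trans ((hF.le_iff hb.1 hb.2 (quantile F b)).2 le_rfl)
  have ham : AEMeasurable (fun q => |quantile F₁ q - quantile F₂ q|)
      (volume.restrict (Ioo (0:ℝ) 1)) := by
    have hsub : AEMeasurable (fun q => quantile F₁ q - quantile F₂ q)
        (volume.restrict (Ioo (0:ℝ) 1)) :=
      (aemeasurable_restrict_of_monotoneOn measurableSet_Ioo (hmono F₁ h₁)).sub
        (aemeasurable_restrict_of_monotoneOn measurableSet_Ioo (hmono F₂ h₂))
    simpa [Real.norm_eq_abs] using hsub.norm
  have hLeq : (∫ q in Ioo (0:ℝ) 1, |quantile F₁ q - quantile F₂ q|) =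
      (∫⁻ q in Ioo (0:ℝ) 1, ENNReal.ofReal |quantile F₁ q - quantile F₂ q|).toReal :=
    integral_eq_lintegral_of_nonneg_ae (Eventually.of_forall fun q => abs_nonneg _)
      ham.aestronglyMeasurable
  rw [hLeq, key, ← hRint, ENNReal.toReal_ofReal (integral_nonneg fun t => abs_nonneg _)]
end

section
/- Consider the network interaction setup: G̃ a simple graph on {1,…,n} with degrees dᵢ and average degree ⟨d⟩, X₁,…,Xₙ i.i.d. with cdf F, updated beliefs X'ᵢ = (Xᵢ + Σ_{j∈Nᵢ} Xⱼ)/(dᵢ+1) with empirical cdf F̂ₙ, and M_{r,s} the distance-at-most-2 indicators satisfying Assumption 1: Σ_{r≠s} M_{r,s} ≤ 2n(⟨d⟩ + ⟨d⟩²). Then for every t ∈ ℝ: (i) E[F̂ₙ(t)] = (1/n) Σ_{i=1}^n F^{dᵢ+1}(t), and (ii) Var(F̂ₙ(t)) ≤ (1/n²)( Σ_{i=1}^n F^{dᵢ+1}(t)(1 − F^{dᵢ+1}(t)) + 2n(⟨d⟩ + ⟨d⟩²) C_t ), where C_t = max_{1≤i≤n} F^{dᵢ+1}(t)(1 − F^{dᵢ+1}(t)).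 -/
open MeasureTheory ProbabilityTheory Finset

/-- The cdf `F^r` of the sample mean of `r` i.i.d. draws from `ν`. -/
noncomputable def sampleMeanCDF (ν : Measure ℝ) (r : ℕ) : ℝ → ℝ :=
  cdfOf (Measure.map (fun x : Fin r → ℝ => (∑ i, x i) / r) (Measure.pi fun _ : Fin r => ν))

section AuxNetwork

variable {Ω : Type*} [MeasurableSpace Ω] {μ : Measure Ω} [IsProbabilityMeasure μ]

lemma aux_map_pi {n : ℕ} (X : Fin n → Ω → ℝ) (hXmeas : ∀ i, Measurable (X i))
    (hXindep : iIndepFun X μ)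
    (ν : Measure ℝ) [IsProbabilityMeasure ν] (hXdist : ∀ i, Measure.map (X i) μ = ν)
    (S : Finset (Fin n)) :
    Measure.map (fun ω (j : S) => X j ω) μ = Measure.pi (fun _ : S => ν) := by
  classical
  have hmeas : Measurable (fun ω (j : S) => X j ω) :=
    measurable_pi_lambda _ fun j => hXmeas j
  refine (Measure.pi_eq fun s hs => ?_).symm
  set sets : Fin n → Set ℝ := fun i => if h : i ∈ S then s ⟨i, h⟩ else Set.univ with hsets
  have hsets_mem : ∀ i (h : i ∈ S), sets i = s ⟨i, h⟩ := by
    intro i h; simp [hsets, h]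
  have hpre : (fun ω (j : S) => X j ω) ⁻¹' (Set.univ.pi s) = ⋂ i ∈ S, X i ⁻¹' sets i := by
    ext ω
    simp only [Set.mem_preimage, Set.mem_pi, Set.mem_univ, forall_true_left, Set.mem_iInter]
    constructor
    · intro h i hi; rw [hsets_mem i hi]; exact h ⟨i, hi⟩
    · intro h j; have := h j j.2; rwa [hsets_mem j j.2] at this
  rw [Measure.map_apply hmeas (MeasurableSet.univ_pi fun j => hs j), hpre,
    hXindep.measure_inter_preimage_eq_mul S (fun i hi => by rw [hsets_mem i hi]; exact hs _)]
  rw [← Finset.prod_coe_sort]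
  refine Finset.prod_congr rfl fun j _ => ?_
  rw [hsets_mem j j.2, ← hXdist j,
    Measure.map_apply (hXmeas j) (hs ⟨j, j.2⟩)]

lemma aux_map_X' {n : ℕ} (G : SimpleGraph (Fin n)) [DecidableRel G.Adj]
    (X : Fin n → Ω → ℝ) (hXmeas : ∀ i, Measurable (X i))
    (hXindep : iIndepFun X μ)
    (ν : Measure ℝ) [IsProbabilityMeasure ν] (hXdist : ∀ i, Measure.map (X i) μ = ν)
    (X' : Fin n → Ω → ℝ)
    (hX' : ∀ i ω, X' i ω =
      (X i ω + ∑ j ∈ G.neighborFinset i, X j ω) / ((G.degree i : ℝ) + 1))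
    (i : Fin n) :
    Measure.map (X' i) μ =
      Measure.map (fun y : Fin (G.degree i + 1) → ℝ => (∑ k, y k) / ((G.degree i + 1 : ℕ) : ℝ))
        (Measure.pi fun _ : Fin (G.degree i + 1) => ν) := by
  classical
  set r := G.degree i + 1 with hr
  set S : Finset (Fin n) := insert i (G.neighborFinset i) with hS
  have hiS : i ∉ G.neighborFinset i := G.notMem_neighborFinset_self i
  have hcard : Fintype.card S = r := by
    rw [Fintype.card_coe, hS, Finset.card_insert_of_notMem hiS,
      G.card_neighborFinset_eq_degree]
  let e : Fin r ≃ S := (S.equivFin.trans (finCongr (by simpa using hcard))).symm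
  have hgmeas : Measurable (fun v : S → ℝ => (∑ j, v j) / ((r : ℕ) : ℝ)) :=
    (Finset.measurable_sum Finset.univ fun j _ => measurable_pi_apply j).div_const _
  have hg : X' i = (fun v : S → ℝ => (∑ j, v j) / ((r : ℕ) : ℝ)) ∘ (fun ω (j : S) => X j ω) := by
    funext ω
    rw [hX']
    simp only [Function.comp]
    rw [Finset.sum_coe_sort (f := fun j => X j ω), hS, Finset.sum_insert hiS]
    norm_num [hr]
  rw [hg, ← Measure.map_map hgmeas (measurable_pi_lambda _ fun j => hXmeas j),
    aux_map_pi X hXmeas hXindep ν hXdist S,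
    ← (MeasureTheory.measurePreserving_piCongrLeft (fun _ : S => ν) e).map_eq,
    Measure.map_map hgmeas (MeasurableEquiv.measurable _)]
  congr 1
  funext y
  simp only [Function.comp]
  congr 1
  rw [← Equiv.sum_comp e (fun j => (MeasurableEquiv.piCongrLeft (fun _ : S => ℝ) e) y j)]
  exact Finset.sum_congr rfl fun k _ => MeasurableEquiv.piCongrLeft_apply_apply (β := fun _ : S => ℝ) e y k

end AuxNetwork

/-- **Mean and variance of the empirical cdf after network interaction.**
In the network interaction setup (simple graph `G̃` on `{1,…,n}`, i.i.d. initial beliefs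
with cdf `F`, averaged updated beliefs `X'ᵢ`, distance-at-most-2 indicators `M_{r,s}`
satisfying Assumption 1), for every `t`:
(i) `E[F̂ₙ(t)] = (1/n) Σᵢ F^{dᵢ+1}(t)`, and
(ii) `Var(F̂ₙ(t)) ≤ (1/n²)(Σᵢ F^{dᵢ+1}(t)(1−F^{dᵢ+1}(t)) + 2n(⟨d⟩+⟨d⟩²) C_t)`,
where `C_t = maxᵢ F^{dᵢ+1}(t)(1−F^{dᵢ+1}(t))` and `⟨d⟩ = (1/n) Σᵢ dᵢ`. -/
theorem empirical_cdf_mean_and_variance_bound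
    {Ω : Type*} [MeasurableSpace Ω] (μ : Measure Ω) [IsProbabilityMeasure μ]
    (n : ℕ) (hn : 0 < n) (G : SimpleGraph (Fin n)) [DecidableRel G.Adj]
    (ν : Measure ℝ) [IsProbabilityMeasure ν] (F : ℝ → ℝ) (hF : F = cdfOf ν)
    (X : Fin n → Ω → ℝ) (hXmeas : ∀ i, Measurable (X i))
    (hXindep : iIndepFun X μ)
    (hXdist : ∀ i, Measure.map (X i) μ = ν)
    (X' : Fin n → Ω → ℝ)
    (hX' : ∀ i ω, X' i ω =
      (X i ω + ∑ j ∈ G.neighborFinset i, X j ω) / ((G.degree i : ℝ) + 1))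
    -- Assumption 1: at most `2n(⟨d⟩ + ⟨d⟩²)` "long range" connections
    (hassum : (∑ q ∈ Finset.univ.offDiag,
        (if ((insert q.1 (G.neighborFinset q.1)) ∩
              (insert q.2 (G.neighborFinset q.2))).Nonempty then (1:ℝ) else 0)) ≤
      2 * n * ((∑ i, (G.degree i : ℝ)) / n + ((∑ i, (G.degree i : ℝ)) / n) ^ 2))
    (t : ℝ) :
    (∫ ω, (n : ℝ)⁻¹ * ∑ i, (if X' i ω ≤ t then (1:ℝ) else 0) ∂μ) =
        (n : ℝ)⁻¹ * ∑ i, sampleMeanCDF ν (G.degree i + 1) t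
    ∧ variance (fun ω => (n : ℝ)⁻¹ * ∑ i, if X' i ω ≤ t then (1:ℝ) else 0) μ ≤
        ((n : ℝ) ^ 2)⁻¹ *
          ((∑ i, sampleMeanCDF ν (G.degree i + 1) t *
              (1 - sampleMeanCDF ν (G.degree i + 1) t))
            + 2 * n * ((∑ i, (G.degree i : ℝ)) / n + ((∑ i, (G.degree i : ℝ)) / n) ^ 2) *
              (⨆ i, sampleMeanCDF ν (G.degree i + 1) t *
                (1 - sampleMeanCDF ν (G.degree i + 1) t))) := by
  classical
  -- abbreviations
  set p : Fin n → ℝ := fun i => sampleMeanCDF ν (G.degree i + 1) t with hp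
  set Y : Fin n → Ω → ℝ := fun i ω => if X' i ω ≤ t then (1:ℝ) else 0 with hY
  set A : Fin n → Set Ω := fun i => {ω | X' i ω ≤ t} with hA
  have hX'meas : ∀ i, Measurable (X' i) := by
    intro i
    have : X' i = fun ω => (X i ω + ∑ j ∈ G.neighborFinset i, X j ω) / ((G.degree i : ℝ) + 1) :=
      funext fun ω => hX' i ω
    rw [this]
    exact ((hXmeas i).add (Finset.measurable_sum _ fun j _ => hXmeas j)).div_const _
  have hAmeas : ∀ i, MeasurableSet (A i) := fun i => measurableSet_le (hX'meas i) measurable_const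
  have hYind : ∀ i, Y i = (A i).indicator (fun _ => (1:ℝ)) := by
    intro i; funext ω
    by_cases h : X' i ω ≤ t <;> simp [hY, hA, Set.indicator, h]
  -- p i is the probability of A i
  have hpA : ∀ i, p i = (μ (A i)).toReal := by
    intro i
    rw [hp]
    have := aux_map_X' (μ := μ) G X hXmeas hXindep ν hXdist X' hX' i
    simp only [sampleMeanCDF, cdfOf]
    rw [← this, Measure.map_apply (hX'meas i) measurableSet_Iic]
    rfl
  have hp0 : ∀ i, 0 ≤ p i := fun i => by rw [hpA]; exact ENNReal.toReal_nonneg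
  have hp1 : ∀ i, p i ≤ 1 := fun i => by rw [hpA]; exact ENNReal.toReal_le_of_le_ofReal one_pos.le (by simpa using prob_le_one (μ := μ) (s := A i))
  -- integrability and means
  have hYint : ∀ i, Integrable (Y i) μ := by
    intro i; rw [hYind]; exact (integrable_const 1).indicator (hAmeas i)
  have hYmean : ∀ i, ∫ ω, Y i ω ∂μ = p i := by
    intro i
    rw [hYind, integral_indicator_const (1:ℝ) (hAmeas i), hpA, smul_eq_mul, mul_one]; rfl
  -- products of indicators
  have hYmul : ∀ i j, (fun ω => Y i ω * Y j ω) = (A i ∩ A j).indicator (fun _ => (1:ℝ)) := by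
    intro i j; funext ω
    by_cases h1 : X' i ω ≤ t <;> by_cases h2 : X' j ω ≤ t <;>
      simp [hY, hA, Set.indicator, Set.mem_inter_iff, h1, h2]
  have hYmulint : ∀ i j, Integrable (fun ω => Y i ω * Y j ω) μ := by
    intro i j; rw [hYmul]; exact (integrable_const 1).indicator ((hAmeas i).inter (hAmeas j))
  set q : Fin n → Fin n → ℝ := fun i j => (∫ ω, Y i ω * Y j ω ∂μ) - p i * p j with hq
  -- part (i)
  have part1 : (∫ ω, (n : ℝ)⁻¹ * ∑ i, Y i ω ∂μ) = (n : ℝ)⁻¹ * ∑ i, p i := by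
    rw [integral_const_mul, integral_finset_sum _ fun i _ => hYint i]
    simp_rw [hYmean]
  refine ⟨part1, ?_⟩
  -- part (ii)
  set S : Fin n → Finset (Fin n) := fun i => insert i (G.neighborFinset i) with hSdef
  -- Memℒp
  have hW2 : ∀ i, MemLp (Y i) 2 μ := by
    intro i; rw [hYind]; exact (memLp_const (1:ℝ)).indicator (hAmeas i)
  have hWmem : MemLp (fun ω => ∑ i, Y i ω) 2 μ := by
    have := memLp_finset_sum (s := (Finset.univ : Finset (Fin n))) (f := Y) (fun i _ => hW2 i)
    simpa using this
  -- variance of the sum as a double sum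
  have hvar : variance (fun ω => ∑ i, Y i ω) μ = ∑ i, ∑ j, q i j := by
    rw [variance_eq_sub hWmem]
    have h2 : (μ[(fun ω => ∑ i, Y i ω) ^ 2]) = ∑ i, ∑ j, ∫ ω, Y i ω * Y j ω ∂μ := by
      have hfun : ((fun ω => ∑ i, Y i ω) ^ 2) = fun ω => ∑ i, ∑ j, Y i ω * Y j ω := by
        funext ω
        simp only [Pi.pow_apply, sq, Finset.sum_mul_sum]
      rw [hfun, integral_finset_sum _ (fun i _ =>
        integrable_finset_sum _ fun j _ => hYmulint i j)]
      exact Finset.sum_congr rfl fun i _ => integral_finset_sum _ fun j _ => hYmulint i j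
    have h1 : (μ[fun ω => ∑ i, Y i ω]) = ∑ i, p i := by
      rw [integral_finset_sum _ fun i _ => hYint i]
      exact Finset.sum_congr rfl fun i _ => hYmean i
    rw [h2, h1, sq, Finset.sum_mul_sum]
    rw [← Finset.sum_sub_distrib]
    exact Finset.sum_congr rfl fun i _ => by rw [← Finset.sum_sub_distrib]
  -- split into diagonal and off-diagonal parts
  have hsplit : ∑ i, ∑ j, q i j
      = (∑ i, q i i) + ∑ pr ∈ Finset.univ.offDiag, q pr.1 pr.2 := by
    rw [← Finset.sum_product' (f := fun i j => q i j), ← Finset.diag_union_offDiag,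
      Finset.sum_union (Finset.disjoint_diag_offDiag _)]
    congr 1
    refine Finset.sum_nbij' (i := fun pr => pr.1) (j := fun i => (i, i)) ?_ ?_ ?_ ?_ ?_
    · intro a ha; exact Finset.mem_univ _
    · intro a _; simp [Finset.mem_diag]
    · intro a ha; rw [Finset.mem_diag] at ha; ext <;> simp [ha.2.symm]
    · intro a _; rfl
    · intro a ha; rw [Finset.mem_diag] at ha; rw [← ha.2]
  -- diagonal values
  have hdiagval : ∀ i, q i i = p i * (1 - p i) := by
    intro i
    have hsq : (fun ω => Y i ω * Y i ω) = Y i := by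
      funext ω; by_cases h : X' i ω ≤ t <;> simp [hY, h]
    simp only [hq]
    rw [hsq, hYmean]; ring
  -- the constant C
  set C : ℝ := ⨆ i, p i * (1 - p i) with hC
  have hCb : BddAbove (Set.range fun i => p i * (1 - p i)) :=
    Set.Finite.bddAbove (Set.finite_range _)
  have hleC : ∀ i, p i * (1 - p i) ≤ C := fun i => le_ciSup hCb i
  have hC0 : 0 ≤ C :=
    le_trans (mul_nonneg (hp0 ⟨0, hn⟩) (by linarith [hp1 ⟨0, hn⟩])) (hleC ⟨0, hn⟩)
  -- each off-diagonal covariance is at most C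
  have hqle : ∀ i j, q i j ≤ C := by
    intro i j
    have h1 : ∫ ω, Y i ω * Y j ω ∂μ ≤ p i := by
      rw [← hYmean i]
      refine integral_mono (hYmulint i j) (hYint i) fun ω => ?_
      by_cases h1 : X' i ω ≤ t <;> by_cases h2 : X' j ω ≤ t <;> simp [hY, h1, h2]
    have h2 : ∫ ω, Y i ω * Y j ω ∂μ ≤ p j := by
      rw [← hYmean j]
      refine integral_mono (hYmulint i j) (hYint j) fun ω => ?_
      by_cases h1 : X' i ω ≤ t <;> by_cases h2 : X' j ω ≤ t <;> simp [hY, h1, h2]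
    rcases le_total (p i) (p j) with hij | hij
    · refine le_trans ?_ (hleC i)
      simp only [hq]
      nlinarith [hp0 i]
    · refine le_trans ?_ (hleC j)
      simp only [hq]
      nlinarith [hp0 j]
  -- representation of Y i through the closed neighborhood
  have hrep : ∀ i, Y i =
      (fun v : ↥(S i) → ℝ =>
          if (∑ l, v l) / ((G.degree i : ℝ) + 1) ≤ t then (1:ℝ) else 0)
        ∘ (fun ω (l : S i) => X l ω) := by
    intro i; funext ω
    simp only [Function.comp, hY]
    congr 1
    rw [Finset.sum_coe_sort (f := fun l => X l ω), hSdef,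
      Finset.sum_insert (G.notMem_neighborFinset_self i), hX']
  have hφmeas : ∀ i : Fin n, Measurable (fun v : ↥(S i) → ℝ =>
      if (∑ l, v l) / ((G.degree i : ℝ) + 1) ≤ t then (1:ℝ) else 0) := by
    intro i
    refine Measurable.ite ?_ measurable_const measurable_const
    exact measurableSet_le
      ((Finset.measurable_sum _ fun l _ => measurable_pi_apply l).div_const _) measurable_const
  -- independent pairs give zero covariance
  have hqzero : ∀ i j, ¬((S i) ∩ (S j)).Nonempty → q i j = 0 := by
    intro i j hM
    have hdisj : Disjoint (S i) (S j) :=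
      Finset.disjoint_iff_inter_eq_empty.mpr (Finset.not_nonempty_iff_eq_empty.mp hM)
    have hind : IndepFun (Y i) (Y j) μ := by
      rw [hrep i, hrep j]
      exact (hXindep.indepFun_finset (S i) (S j) hdisj hXmeas).comp (hφmeas i) (hφmeas j)
    have hmul := hind.integral_mul_eq_mul_integral (hYint i).1 (hYint j).1
    simp only [hq]
    have : ∫ ω, Y i ω * Y j ω ∂μ = p i * p j := by
      rw [← hYmean i, ← hYmean j]
      simpa [Pi.mul_apply] using hmul
    rw [this, sub_self]
  -- bound the off-diagonal sum
  set B : ℝ := 2 * n * ((∑ i, (G.degree i : ℝ)) / n + ((∑ i, (G.degree i : ℝ)) / n) ^ 2)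
    with hB
  have hoff : ∑ pr ∈ Finset.univ.offDiag, q pr.1 pr.2 ≤ B * C := by
    have step1 : ∑ pr ∈ Finset.univ.offDiag, q pr.1 pr.2 ≤
        (∑ pr ∈ Finset.univ.offDiag,
          (if ((S pr.1) ∩ (S pr.2)).Nonempty then (1:ℝ) else 0)) * C := by
      rw [Finset.sum_mul]
      refine Finset.sum_le_sum fun pr _ => ?_
      by_cases hM : ((S pr.1) ∩ (S pr.2)).Nonempty
      · rw [if_pos hM, one_mul]; exact hqle pr.1 pr.2
      · rw [if_neg hM, zero_mul, hqzero pr.1 pr.2 hM]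
    exact le_trans step1 (mul_le_mul_of_nonneg_right hassum hC0)
  -- put everything together
  have hWbound : variance (fun ω => ∑ i, Y i ω) μ ≤ (∑ i, p i * (1 - p i)) + B * C := by
    rw [hvar, hsplit]
    have : ∑ i, q i i = ∑ i, p i * (1 - p i) :=
      Finset.sum_congr rfl fun i _ => hdiagval i
    rw [this]
    linarith [hoff]
  have hfun : (fun ω => (n : ℝ)⁻¹ * ∑ i, Y i ω)
      = (n : ℝ)⁻¹ • (fun ω => ∑ i, Y i ω) := rfl
  rw [hfun, variance_smul, inv_pow]
  have hrw : (∑ i, sampleMeanCDF ν (G.degree i + 1) t *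
      (1 - sampleMeanCDF ν (G.degree i + 1) t)) + B * C
      = (∑ i, p i * (1 - p i)) + B * C := by simp only [hp]
  rw [hrw]
  exact mul_le_mul_of_nonneg_left hWbound (by positivity)
end

section
/- Let N ≥ 4, p ∈ (0,1), and consider the Erdős–Rényi random graph 𝓡(N, p) with average degree ⟨d⟩ = (N−1)p. For each vertex v, let L_v = D_v + D_{2v}, where D_v is the degree of v and D_{2v} is the number of 2-stars with v as a leaf. Then P( for all vertices v: L_v ≤ 2⟨d⟩ + 2⟨d⟩² ) ≥ 1 − N·exp(−2p²(N−1)) − N·Var(D_{2v₀}) / (E[D_{2v₀}])², where v₀ is any fixed vertex (the variables D_{2v} are identically distributed across vertices v). -/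
open MeasureTheory ProbabilityTheory Finset

/-- Index type for the unordered pairs of distinct vertices of `Fin N`,
represented by ordered pairs `(u, w)` with `u < w`. -/
abbrev EdgeIdx (N : ℕ) := {e : Fin N × Fin N // e.1 < e.2}

/-- The edge indicator variable of the unordered pair `{u, w}`. -/
def edgeVar {N : ℕ} {Ω : Type*} (X : EdgeIdx N → Ω → ℝ) (u w : Fin N) (ω : Ω) : ℝ :=
  if h : u < w then X ⟨(u, w), h⟩ ω else if h' : w < u then X ⟨(w, u), h'⟩ ω else 0

/-- The degree of a vertex: `D_v = Σ_{w ≠ v} X_{vw}`. -/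
def degRV {N : ℕ} {Ω : Type*} (X : EdgeIdx N → Ω → ℝ) (v : Fin N) (ω : Ω) : ℝ :=
  ∑ w ∈ Finset.univ.erase v, edgeVar X v w ω

/-- The number of 2-stars with `v` as a leaf:
`D_{2v} = Σ_{w ≠ v} Σ_{u ∉ {v,w}} X_{vw} X_{wu}`. -/
def twoStarRV {N : ℕ} {Ω : Type*} (X : EdgeIdx N → Ω → ℝ) (v : Fin N) (ω : Ω) : ℝ :=
  ∑ w ∈ Finset.univ.erase v, ∑ u ∈ (Finset.univ.erase v).erase w,
    edgeVar X v w ω * edgeVar X w u ω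

/-- The Bernoulli(p) distribution on `ℝ`: mass `p` at `1` and `1 − p` at `0`. -/
noncomputable def bernoulliRM (p : ℝ) : Measure ℝ :=
  ENNReal.ofReal p • Measure.dirac 1 + ENNReal.ofReal (1 - p) • Measure.dirac 0

namespace ERH
set_option linter.unusedSectionVars false
set_option linter.unnecessarySimpa false

variable {N : ℕ} {Ω : Type*}

/-! ### Combinatorics of edges -/

def symEdge (u w : Fin N) (h : u ≠ w) : EdgeIdx N :=
  if hlt : u < w then ⟨(u, w), hlt⟩ else ⟨(w, u), (h.lt_or_gt.resolve_left hlt)⟩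

lemma edgeVar_eq (X : EdgeIdx N → Ω → ℝ) {u w : Fin N} (h : u ≠ w) (ω : Ω) :
    edgeVar X u w ω = X (symEdge u w h) ω := by
  unfold edgeVar symEdge
  rcases h.lt_or_gt with h1 | h1
  · simp [h1]
  · simp [h1, not_lt_of_gt h1]

lemma edgeVar_self (X : EdgeIdx N → Ω → ℝ) (u : Fin N) (ω : Ω) :
    edgeVar X u u ω = 0 := by simp [edgeVar]

lemma symEdge_comm {u w : Fin N} (h : u ≠ w) : symEdge u w h = symEdge w u h.symm := by
  unfold symEdge
  rcases h.lt_or_gt with h1 | h1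
  · simp [h1, not_lt_of_gt h1]
  · simp [h1, not_lt_of_gt h1]

lemma symEdge_eq_iff {a b c d : Fin N} (hab : a ≠ b) (hcd : c ≠ d) :
    symEdge a b hab = symEdge c d hcd ↔ (a = c ∧ b = d) ∨ (a = d ∧ b = c) := by
  unfold symEdge
  rcases hab.lt_or_gt with h1 | h1 <;> rcases hcd.lt_or_gt with h2 | h2 <;>
    simp only [h1, h2, not_lt_of_gt, dif_pos, dif_neg, Subtype.mk.injEq, Prod.mk.injEq] <;>
    constructor <;> rintro (⟨rfl, rfl⟩ | ⟨rfl, rfl⟩) <;> simp_all <;> omega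

lemma symEdge_idx (e : EdgeIdx N) : symEdge e.1.1 e.1.2 (ne_of_lt e.2) = e := by
  unfold symEdge
  simp [e.2]

lemma symEdge_ne_chain {v w u : Fin N} (hvw : v ≠ w) (hwu : w ≠ u) (hvu : v ≠ u) :
    symEdge v w hvw ≠ symEdge w u hwu := by
  intro hEq
  rcases (symEdge_eq_iff hvw hwu).mp hEq with ⟨h, -⟩ | ⟨h, -⟩
  · exact hvw h
  · exact hvu h

lemma symEdge_ne_share {v w w' : Fin N} (hvw : v ≠ w) (hvw' : v ≠ w') (hww' : w ≠ w') :
    symEdge v w hvw ≠ symEdge v w' hvw' := by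
  intro hEq
  rcases (symEdge_eq_iff hvw hvw').mp hEq with ⟨-, h⟩ | ⟨h, -⟩
  · exact hww' h
  · exact hvw' h

lemma mem01 {x : ℝ} (h : x ∈ ({0, 1} : Set ℝ)) : 0 ≤ x ∧ x ≤ 1 ∧ x * x = x := by
  rcases h with rfl | h
  · norm_num
  · rw [Set.mem_singleton_iff] at h; subst h; norm_num

/-! ### The Bernoulli measure -/

lemma bern_prob {p : ℝ} (h0 : 0 ≤ p) (h1 : p ≤ 1) : IsProbabilityMeasure (bernoulliRM p) := by
  constructor
  unfold bernoulliRM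
  simp only [Measure.add_apply, Measure.smul_apply, Measure.dirac_apply' _ MeasurableSet.univ,
    Set.indicator_univ, smul_eq_mul, mul_one, Pi.one_apply]
  rw [← ENNReal.ofReal_add h0 (by linarith)]
  norm_num

lemma integrable_dirac'' (f : ℝ → ℝ) (hf : Measurable f) (a : ℝ) :
    Integrable f (Measure.dirac a) := by
  refine ⟨hf.aestronglyMeasurable, ?_⟩
  have : ∫⁻ x, ‖f x‖₊ ∂(Measure.dirac a) = ‖f a‖₊ :=
    lintegral_dirac' a (by measurability)
  simp [HasFiniteIntegral, this]

lemma integrable_dirac_smul {p : ℝ} (f : ℝ → ℝ) (hf : Measurable f) (a : ℝ) :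
    Integrable f (ENNReal.ofReal p • Measure.dirac a) :=
  (integrable_dirac'' f hf a).smul_measure ENNReal.ofReal_ne_top

lemma bern_integral {p : ℝ} (h0 : 0 ≤ p) (h1 : p ≤ 1) (f : ℝ → ℝ) (hf : Measurable f) :
    ∫ x, f x ∂(bernoulliRM p) = p * f 1 + (1 - p) * f 0 := by
  unfold bernoulliRM
  rw [integral_add_measure]
  · rw [integral_smul_measure, integral_smul_measure, integral_dirac, integral_dirac]
    simp [ENNReal.toReal_ofReal h0, ENNReal.toReal_ofReal (by linarith : (0:ℝ) ≤ 1 - p),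
      smul_eq_mul]
  · exact integrable_dirac_smul f hf 1
  · exact integrable_dirac_smul f hf 0

lemma bern_notmem01 {p : ℝ} : bernoulliRM p ({0, 1} : Set ℝ)ᶜ = 0 := by
  unfold bernoulliRM
  have hm : MeasurableSet (({0, 1} : Set ℝ)ᶜ) := (by measurability)
  simp only [Measure.add_apply, Measure.smul_apply, Measure.dirac_apply' _ hm]
  have h1 : (1:ℝ) ∈ ({0,1} : Set ℝ) := by simp
  have h0 : (0:ℝ) ∈ ({0,1} : Set ℝ) := by simp
  simp [Set.indicator_of_notMem, h0, h1]

/-! ### Setup -/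

structure Setup (N : ℕ) {Ω : Type*} [MeasurableSpace Ω] (μ : Measure Ω) (p : ℝ)
    (X : EdgeIdx N → Ω → ℝ) : Prop where
  hp0 : 0 ≤ p
  hp1 : p ≤ 1
  meas : ∀ e, Measurable (X e)
  indep : iIndepFun X μ
  dist : ∀ e, Measure.map (X e) μ = bernoulliRM p

variable [MeasurableSpace Ω] {μ : Measure Ω} [IsProbabilityMeasure μ]
  {p : ℝ} {X : EdgeIdx N → Ω → ℝ}

lemma Setup.ae01 (S : Setup N μ p X) : ∀ᵐ ω ∂μ, ∀ e, X e ω ∈ ({0, 1} : Set ℝ) := by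
  rw [ae_all_iff]
  intro e
  have hm : MeasurableSet (({0, 1} : Set ℝ)ᶜ) := (by measurability)
  have h : μ (X e ⁻¹' ({0, 1} : Set ℝ)ᶜ) = 0 := by
    rw [← Measure.map_apply (S.meas e) hm, S.dist e, bern_notmem01]
  rw [ae_iff]
  convert h using 2
  rfl

lemma Setup.integral_X (S : Setup N μ p X) (e : EdgeIdx N) : ∫ ω, X e ω ∂μ = p := by
  have h := integral_map (μ := μ) (φ := X e) (S.meas e).aemeasurable
    (f := fun x => x) measurable_id.aestronglyMeasurable
  rw [S.dist] at h
  rw [← h, bern_integral S.hp0 S.hp1 (fun x => x) measurable_id]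
  ring

lemma Setup.integral_prod_edges (S : Setup N μ p X) (s : Finset (EdgeIdx N)) :
    ∫ ω, ∏ e ∈ s, X e ω ∂μ = p ^ s.card := by
  classical
  induction s using Finset.induction_on with
  | empty => simp
  | insert a s ha ih =>
    have hindep : IndepFun (X a) (fun ω => ∏ e ∈ s, X e ω) μ := by
      have h := (S.indep.indepFun_finset_prod_of_notMem S.meas ha).symm
      rwa [show (∏ j ∈ s, X j) = fun ω => ∏ e ∈ s, X e ω from
        funext fun ω => Finset.prod_apply ω s X] at h
    have h2 : ∫ ω, X a ω * ∏ e ∈ s, X e ω ∂μ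
        = (∫ ω, X a ω ∂μ) * ∫ ω, ∏ e ∈ s, X e ω ∂μ :=
      hindep.integral_fun_mul_eq_mul_integral (S.meas a).aestronglyMeasurable
        ((s.measurable_prod (fun i _ => S.meas i)).aestronglyMeasurable)
    simp only [Finset.prod_insert ha, h2, ih, S.integral_X,
      Finset.card_insert_of_notMem ha, pow_succ]
    ring

/-! ### Measurability and bounds -/

lemma measurable_edgeVar (hXmeas : ∀ e, Measurable (X e)) (a b : Fin N) :
    Measurable (fun ω => edgeVar X a b ω) := by
  unfold edgeVar
  by_cases h : a < b
  · simpa [h] using hXmeas _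
  · by_cases h' : b < a
    · simpa [h, h'] using hXmeas _
    · simpa [h, h'] using measurable_const

lemma measurable_deg (hXmeas : ∀ e, Measurable (X e)) (v : Fin N) :
    Measurable (degRV X v) :=
  Finset.measurable_sum _ fun w _ => measurable_edgeVar hXmeas v w

lemma measurable_twoStar (hXmeas : ∀ e, Measurable (X e)) (v : Fin N) :
    Measurable (twoStarRV X v) :=
  Finset.measurable_sum _ fun w _ => Finset.measurable_sum _ fun u _ =>
    (measurable_edgeVar hXmeas v w).mul (measurable_edgeVar hXmeas w u)

lemma edgeVar_mem {ω : Ω} (h : ∀ e, X e ω ∈ ({0, 1} : Set ℝ)) (a b : Fin N) :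
    edgeVar X a b ω ∈ ({0, 1} : Set ℝ) := by
  unfold edgeVar
  split_ifs
  · exact h _
  · exact h _
  · simp

lemma int_bdd {f : Ω → ℝ} (hf : Measurable f) {C : ℝ} (h : ∀ᵐ ω ∂μ, |f ω| ≤ C) :
    Integrable f μ :=
  memLp_one_iff_integrable.mp
    (MemLp.of_bound hf.aestronglyMeasurable C (by simpa [Real.norm_eq_abs] using h))

lemma memℒp2_bdd {f : Ω → ℝ} (hf : Measurable f) {C : ℝ} (h : ∀ᵐ ω ∂μ, |f ω| ≤ C) :
    MemLp f 2 μ :=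
  MemLp.of_bound hf.aestronglyMeasurable C (by simpa [Real.norm_eq_abs] using h)


/-! ### Elementary moment computations -/

lemma Setup.integral_two (S : Setup N μ p X) {e1 e2 : EdgeIdx N} (h : e1 ≠ e2) :
    ∫ ω, X e1 ω * X e2 ω ∂μ = p ^ 2 := by
  have h2 := S.integral_prod_edges {e1, e2}
  rw [Finset.card_pair h] at h2
  rw [← h2]
  apply integral_congr_ae
  filter_upwards with ω
  rw [Finset.prod_pair h]

lemma Setup.integral_three (S : Setup N μ p X) {e1 e2 e3 : EdgeIdx N}
    (h12 : e1 ≠ e2) (h13 : e1 ≠ e3) (h23 : e2 ≠ e3) :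
    ∫ ω, X e1 ω * X e2 ω * X e3 ω ∂μ = p ^ 3 := by
  have h2 := S.integral_prod_edges {e1, e2, e3}
  have hc : ({e1, e2, e3} : Finset (EdgeIdx N)).card = 3 := by
    rw [Finset.card_insert_of_notMem (by simp [h12, h13]),
      Finset.card_insert_of_notMem (by simp [h23]), Finset.card_singleton]
  rw [hc] at h2
  rw [← h2]
  apply integral_congr_ae
  filter_upwards with ω
  rw [Finset.prod_insert (by simp [h12, h13]), Finset.prod_pair h23, mul_assoc]

lemma Setup.integral_term2 (S : Setup N μ p X) {v w u : Fin N}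
    (hvw : v ≠ w) (hwu : w ≠ u) (hvu : v ≠ u) :
    ∫ ω, edgeVar X v w ω * edgeVar X w u ω ∂μ = p ^ 2 := by
  simp_rw [edgeVar_eq X hvw, edgeVar_eq X hwu]
  exact S.integral_two (symEdge_ne_chain hvw hwu hvu)

lemma Setup.integral_term2' (S : Setup N μ p X) {v w w' : Fin N}
    (hvw : v ≠ w) (hvw' : v ≠ w') (hww' : w ≠ w') :
    ∫ ω, edgeVar X v w ω * edgeVar X v w' ω ∂μ = p ^ 2 := by
  simp_rw [edgeVar_eq X hvw, edgeVar_eq X hvw']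
  exact S.integral_two (symEdge_ne_share hvw hvw' hww')

lemma Setup.integral_edge_sq (S : Setup N μ p X) {v w : Fin N} (hvw : v ≠ w) :
    ∫ ω, edgeVar X v w ω * edgeVar X v w ω ∂μ = p := by
  have hae : (fun ω => edgeVar X v w ω * edgeVar X v w ω)
      =ᵐ[μ] (fun ω => edgeVar X v w ω) := by
    filter_upwards [S.ae01] with ω h
    exact (mem01 (edgeVar_mem h v w)).2.2
  rw [integral_congr_ae hae]
  simp_rw [edgeVar_eq X hvw]
  exact S.integral_X _

lemma Setup.integral_term3 (S : Setup N μ p X) {v w u w' : Fin N} (hvw : v ≠ w)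
    (hwu : w ≠ u) (hvu : v ≠ u) (hvw' : v ≠ w') (hww' : w ≠ w') :
    ∫ ω, edgeVar X v w ω * edgeVar X w u ω * edgeVar X v w' ω ∂μ = p ^ 3 := by
  simp_rw [edgeVar_eq X hvw, edgeVar_eq X hwu, edgeVar_eq X hvw']
  refine S.integral_three (symEdge_ne_chain hvw hwu hvu)
    (symEdge_ne_share hvw hvw' hww') ?_
  intro hEq
  rcases (symEdge_eq_iff hwu hvw').mp hEq with ⟨h, -⟩ | ⟨-, h⟩
  · exact hvw h.symm
  · exact hvu h.symm

lemma Setup.integral_term_sq2 (S : Setup N μ p X) {v w u : Fin N}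
    (hvw : v ≠ w) (hwu : w ≠ u) (hvu : v ≠ u) :
    ∫ ω, edgeVar X v w ω * edgeVar X w u ω * edgeVar X v w ω ∂μ = p ^ 2 := by
  have hae : (fun ω => edgeVar X v w ω * edgeVar X w u ω * edgeVar X v w ω)
      =ᵐ[μ] (fun ω => edgeVar X v w ω * edgeVar X w u ω) := by
    filter_upwards [S.ae01] with ω h
    have hx := (mem01 (edgeVar_mem h v w)).2.2
    show edgeVar X v w ω * edgeVar X w u ω * edgeVar X v w ω
      = edgeVar X v w ω * edgeVar X w u ω
    linear_combination edgeVar X w u ω * hx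
  rw [integral_congr_ae hae]
  exact S.integral_term2 hvw hwu hvu

/-! ### Integrability of products of edge variables -/

lemma Setup.int_prod2 (S : Setup N μ p X) (a b c d : Fin N) :
    Integrable (fun ω => edgeVar X a b ω * edgeVar X c d ω) μ := by
  refine int_bdd ((measurable_edgeVar S.meas a b).mul (measurable_edgeVar S.meas c d))
    (C := 1) ?_
  filter_upwards [S.ae01] with ω h
  have h1 := mem01 (edgeVar_mem h a b)
  have h2 := mem01 (edgeVar_mem h c d)
  rw [abs_mul]
  calc |edgeVar X a b ω| * |edgeVar X c d ω| ≤ 1 * 1 := by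
        apply mul_le_mul
        · rw [abs_le]; constructor <;> linarith [h1.1, h1.2.1]
        · rw [abs_le]; constructor <;> linarith [h2.1, h2.2.1]
        · exact abs_nonneg _
        · norm_num
    _ = 1 := by norm_num

lemma Setup.int_prod3 (S : Setup N μ p X) (a b c d e f : Fin N) :
    Integrable (fun ω => edgeVar X a b ω * edgeVar X c d ω * edgeVar X e f ω) μ := by
  refine int_bdd (((measurable_edgeVar S.meas a b).mul
    (measurable_edgeVar S.meas c d)).mul (measurable_edgeVar S.meas e f)) (C := 1) ?_
  filter_upwards [S.ae01] with ω h
  have h1 := mem01 (edgeVar_mem h a b)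
  have h2 := mem01 (edgeVar_mem h c d)
  have h3 := mem01 (edgeVar_mem h e f)
  have hA : |edgeVar X a b ω| ≤ 1 := by rw [abs_le]; constructor <;> linarith [h1.1, h1.2.1]
  have hC : |edgeVar X c d ω| ≤ 1 := by rw [abs_le]; constructor <;> linarith [h2.1, h2.2.1]
  have hE : |edgeVar X e f ω| ≤ 1 := by rw [abs_le]; constructor <;> linarith [h3.1, h3.2.1]
  rw [abs_mul, abs_mul]
  have h4 : |edgeVar X a b ω| * |edgeVar X c d ω| ≤ 1 :=
    mul_le_one₀ hA (abs_nonneg _) hC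
  exact mul_le_one₀ h4 (abs_nonneg _) hE


/-! ### Aggregate moments -/

lemma card_erase1 (v : Fin N) :
    ((((Finset.univ : Finset (Fin N))).erase v).card : ℝ) = (N : ℝ) - 1 := by
  rw [Finset.card_erase_of_mem (Finset.mem_univ v), Finset.card_univ, Fintype.card_fin]
  have h1 : 1 ≤ N := Fin.pos v
  push_cast [Nat.cast_sub h1]
  ring

lemma card_erase2 (hN : 4 ≤ N) (v w : Fin N) (hw : w ∈ (Finset.univ : Finset (Fin N)).erase v) :
    (((((Finset.univ : Finset (Fin N))).erase v).erase w).card : ℝ) = (N : ℝ) - 2 := by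
  rw [Finset.card_erase_of_mem hw, Finset.card_erase_of_mem (Finset.mem_univ v),
    Finset.card_univ, Fintype.card_fin]
  have : ((N - 1 - 1 : ℕ) : ℝ) = (N : ℝ) - 2 := by
    have h2 : 2 ≤ N := by omega
    push_cast [Nat.cast_sub (by omega : 1 ≤ N), Nat.cast_sub (by omega : 1 ≤ N - 1)]
    push_cast [Nat.cast_sub (by omega : 1 ≤ N)]
    ring
  rw [this]

lemma Setup.int_edge (S : Setup N μ p X) (a b : Fin N) :
    Integrable (fun ω => edgeVar X a b ω) μ := by
  refine int_bdd (measurable_edgeVar S.meas a b) (C := 1) ?_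
  filter_upwards [S.ae01] with ω h
  have h1 := mem01 (edgeVar_mem h a b)
  rw [abs_le]; constructor <;> linarith [h1.1, h1.2.1]

lemma Setup.integral_edgeVar (S : Setup N μ p X) {v w : Fin N} (hvw : v ≠ w) :
    ∫ ω, edgeVar X v w ω ∂μ = p := by
  simp_rw [edgeVar_eq X hvw]
  exact S.integral_X _

lemma Setup.integral_deg (S : Setup N μ p X) (v : Fin N) :
    ∫ ω, degRV X v ω ∂μ = ((N : ℝ) - 1) * p := by
  unfold degRV
  rw [integral_finset_sum _ (fun w _ => S.int_edge v w)]
  rw [Finset.sum_congr rfl (fun w hw =>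
    S.integral_edgeVar (Ne.symm (Finset.mem_erase.mp hw).1))]
  rw [Finset.sum_const, nsmul_eq_mul, card_erase1]

lemma Setup.integral_twoStar (S : Setup N μ p X) (hN : 4 ≤ N) (v : Fin N) :
    ∫ ω, twoStarRV X v ω ∂μ = ((N : ℝ) - 1) * (((N : ℝ) - 2) * p ^ 2) := by
  unfold twoStarRV
  rw [integral_finset_sum _ (fun w _ => integrable_finset_sum _ (fun u _ => S.int_prod2 v w w u))]
  have h1 : ∀ w ∈ (Finset.univ : Finset (Fin N)).erase v,
      ∫ ω, ∑ u ∈ (Finset.univ.erase v).erase w,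
        edgeVar X v w ω * edgeVar X w u ω ∂μ = ((N : ℝ) - 2) * p ^ 2 := by
    intro w hw
    rw [integral_finset_sum _ (fun u _ => S.int_prod2 v w w u)]
    have hwv := (Finset.mem_erase.mp hw).1
    have h2 : ∀ u ∈ ((Finset.univ : Finset (Fin N)).erase v).erase w,
        ∫ ω, edgeVar X v w ω * edgeVar X w u ω ∂μ = p ^ 2 := by
      intro u hu
      have huw := (Finset.mem_erase.mp hu).1
      have huv := (Finset.mem_erase.mp (Finset.mem_erase.mp hu).2).1
      exact S.integral_term2 hwv.symm huw.symm huv.symm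
    rw [Finset.sum_congr rfl h2, Finset.sum_const, nsmul_eq_mul, card_erase2 hN v w hw]
  rw [Finset.sum_congr rfl h1, Finset.sum_const, nsmul_eq_mul, card_erase1]

lemma Setup.integral_deg_sq (S : Setup N μ p X) (hN : 4 ≤ N) (v : Fin N) :
    ∫ ω, degRV X v ω * degRV X v ω ∂μ = ((N : ℝ) - 1) * (p + ((N : ℝ) - 2) * p ^ 2) := by
  have hexp : ∀ ω, degRV X v ω * degRV X v ω = ∑ w ∈ Finset.univ.erase v,
      ∑ w' ∈ Finset.univ.erase v, edgeVar X v w ω * edgeVar X v w' ω := by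
    intro ω
    unfold degRV
    rw [Finset.sum_mul_sum]
  simp_rw [hexp]
  rw [integral_finset_sum _ (fun w _ => integrable_finset_sum _ (fun w' _ => S.int_prod2 v w v w'))]
  have h1 : ∀ w ∈ (Finset.univ : Finset (Fin N)).erase v,
      ∫ ω, ∑ w' ∈ Finset.univ.erase v,
        edgeVar X v w ω * edgeVar X v w' ω ∂μ = p + ((N : ℝ) - 2) * p ^ 2 := by
    intro w hw
    rw [integral_finset_sum _ (fun w' _ => S.int_prod2 v w v w')]
    have hwv := (Finset.mem_erase.mp hw).1
    rw [← Finset.add_sum_erase _ _ hw, S.integral_edge_sq hwv.symm]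
    have h2 : ∀ w' ∈ ((Finset.univ : Finset (Fin N)).erase v).erase w,
        ∫ ω, edgeVar X v w ω * edgeVar X v w' ω ∂μ = p ^ 2 := by
      intro w' hw'
      have hw'w := (Finset.mem_erase.mp hw').1
      have hw'v := (Finset.mem_erase.mp (Finset.mem_erase.mp hw').2).1
      exact S.integral_term2' hwv.symm hw'v.symm hw'w.symm
    rw [Finset.sum_congr rfl h2, Finset.sum_const, nsmul_eq_mul, card_erase2 hN v w hw]
  rw [Finset.sum_congr rfl h1, Finset.sum_const, nsmul_eq_mul, card_erase1]

lemma Setup.integral_twoStar_deg (S : Setup N μ p X) (hN : 4 ≤ N) (v : Fin N) :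
    ∫ ω, twoStarRV X v ω * degRV X v ω ∂μ
      = ((N : ℝ) - 1) * (((N : ℝ) - 2) * (p ^ 2 + ((N : ℝ) - 2) * p ^ 3)) := by
  have hexp : ∀ ω, twoStarRV X v ω * degRV X v ω = ∑ w ∈ Finset.univ.erase v,
      ∑ u ∈ (Finset.univ.erase v).erase w, ∑ w' ∈ Finset.univ.erase v,
        edgeVar X v w ω * edgeVar X w u ω * edgeVar X v w' ω := by
    intro ω
    unfold twoStarRV degRV
    rw [Finset.sum_mul]
    refine Finset.sum_congr rfl (fun w hw => ?_)
    rw [Finset.sum_mul]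
    refine Finset.sum_congr rfl (fun u hu => ?_)
    rw [Finset.mul_sum]
  simp_rw [hexp]
  rw [integral_finset_sum _ (fun w _ => integrable_finset_sum _ (fun u _ =>
    integrable_finset_sum _ (fun w' _ => S.int_prod3 v w w u v w')))]
  have h1 : ∀ w ∈ (Finset.univ : Finset (Fin N)).erase v,
      ∫ ω, ∑ u ∈ (Finset.univ.erase v).erase w, ∑ w' ∈ Finset.univ.erase v,
          edgeVar X v w ω * edgeVar X w u ω * edgeVar X v w' ω ∂μ
        = ((N : ℝ) - 2) * (p ^ 2 + ((N : ℝ) - 2) * p ^ 3) := by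
    intro w hw
    rw [integral_finset_sum _ (fun u _ =>
      integrable_finset_sum _ (fun w' _ => S.int_prod3 v w w u v w'))]
    have hwv := (Finset.mem_erase.mp hw).1
    have h2 : ∀ u ∈ ((Finset.univ : Finset (Fin N)).erase v).erase w,
        ∫ ω, ∑ w' ∈ Finset.univ.erase v,
            edgeVar X v w ω * edgeVar X w u ω * edgeVar X v w' ω ∂μ
          = p ^ 2 + ((N : ℝ) - 2) * p ^ 3 := by
      intro u hu
      have huw := (Finset.mem_erase.mp hu).1
      have huv := (Finset.mem_erase.mp (Finset.mem_erase.mp hu).2).1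
      rw [integral_finset_sum _ (fun w' _ => S.int_prod3 v w w u v w')]
      rw [← Finset.add_sum_erase _ _ hw, S.integral_term_sq2 hwv.symm huw.symm huv.symm]
      have h3 : ∀ w' ∈ ((Finset.univ : Finset (Fin N)).erase v).erase w,
          ∫ ω, edgeVar X v w ω * edgeVar X w u ω * edgeVar X v w' ω ∂μ = p ^ 3 := by
        intro w' hw'
        have hw'w := (Finset.mem_erase.mp hw').1
        have hw'v := (Finset.mem_erase.mp (Finset.mem_erase.mp hw').2).1
        exact S.integral_term3 hwv.symm huw.symm huv.symm hw'v.symm hw'w.symm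
      rw [Finset.sum_congr rfl h3, Finset.sum_const, nsmul_eq_mul, card_erase2 hN v w hw]
    rw [Finset.sum_congr rfl h2, Finset.sum_const, nsmul_eq_mul, card_erase2 hN v w hw]
  rw [Finset.sum_congr rfl h1, Finset.sum_const, nsmul_eq_mul, card_erase1]


/-! ### a.e. bounds on degree and two-star counts -/

lemma deg_bounds {ω : Ω} (h : ∀ e, X e ω ∈ ({0, 1} : Set ℝ)) (v : Fin N) :
    0 ≤ degRV X v ω ∧ degRV X v ω ≤ (N : ℝ) - 1 := by
  constructor
  · exact Finset.sum_nonneg fun w _ => (mem01 (edgeVar_mem h v w)).1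
  · calc degRV X v ω ≤ (Finset.univ.erase v).card • (1 : ℝ) :=
          Finset.sum_le_card_nsmul _ _ 1 (fun w _ => (mem01 (edgeVar_mem h v w)).2.1)
      _ = (N : ℝ) - 1 := by rw [nsmul_eq_mul, mul_one, card_erase1]

lemma twoStar_bounds {ω : Ω} (h : ∀ e, X e ω ∈ ({0, 1} : Set ℝ)) (v : Fin N) :
    0 ≤ twoStarRV X v ω ∧ twoStarRV X v ω ≤ (N : ℝ) * (N : ℝ) := by
  have hterm : ∀ w u : Fin N, 0 ≤ edgeVar X v w ω * edgeVar X w u ω ∧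
      edgeVar X v w ω * edgeVar X w u ω ≤ 1 := by
    intro w u
    have h1 := mem01 (edgeVar_mem h v w)
    have h2 := mem01 (edgeVar_mem h w u)
    exact ⟨mul_nonneg h1.1 h2.1, mul_le_one₀ h1.2.1 h2.1 h2.2.1⟩
  constructor
  · exact Finset.sum_nonneg fun w _ => Finset.sum_nonneg fun u _ => (hterm w u).1
  · have hN1 : ((Finset.univ : Finset (Fin N)).erase v).card ≤ N := by
      calc ((Finset.univ : Finset (Fin N)).erase v).card
          ≤ (Finset.univ : Finset (Fin N)).card := Finset.card_erase_le
        _ = N := by rw [Finset.card_univ, Fintype.card_fin]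
    calc twoStarRV X v ω ≤ ∑ w ∈ Finset.univ.erase v, (N : ℝ) := by
          apply Finset.sum_le_sum
          intro w _
          calc ∑ u ∈ (Finset.univ.erase v).erase w, edgeVar X v w ω * edgeVar X w u ω
              ≤ ((Finset.univ.erase v).erase w).card • (1 : ℝ) :=
                Finset.sum_le_card_nsmul _ _ 1 (fun u _ => (hterm w u).2)
            _ ≤ (N : ℝ) := by
                rw [nsmul_eq_mul, mul_one]
                have : (((Finset.univ.erase v).erase w).card : ℝ) ≤ (N : ℝ) := by
                  exact_mod_cast le_trans Finset.card_erase_le hN1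
                exact this
      _ = (Finset.univ.erase v).card • (N : ℝ) := by rw [Finset.sum_const]
      _ ≤ (N : ℝ) * (N : ℝ) := by
          rw [nsmul_eq_mul]
          have h0 : (0:ℝ) ≤ (N : ℝ) := Nat.cast_nonneg N
          have : ((Finset.univ.erase v).card : ℝ) ≤ (N : ℝ) := by exact_mod_cast hN1
          nlinarith

lemma Setup.deg_abs_bdd (S : Setup N μ p X) (v : Fin N) :
    ∀ᵐ ω ∂μ, |degRV X v ω| ≤ (N : ℝ) := by
  filter_upwards [S.ae01] with ω h
  have hb := deg_bounds h v
  rw [abs_le]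
  constructor <;> [linarith [hb.1]; linarith [hb.2]]

lemma Setup.twoStar_abs_bdd (S : Setup N μ p X) (v : Fin N) :
    ∀ᵐ ω ∂μ, |twoStarRV X v ω| ≤ (N : ℝ) * (N : ℝ) := by
  filter_upwards [S.ae01] with ω h
  have hb := twoStar_bounds h v
  rw [abs_le]
  constructor <;> [linarith [hb.1]; linarith [hb.2]]

lemma Setup.int_deg (S : Setup N μ p X) (v : Fin N) : Integrable (degRV X v) μ :=
  int_bdd (measurable_deg S.meas v) (S.deg_abs_bdd v)

lemma Setup.int_twoStar (S : Setup N μ p X) (v : Fin N) : Integrable (twoStarRV X v) μ :=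
  int_bdd (measurable_twoStar S.meas v) (S.twoStar_abs_bdd v)

lemma Setup.memℒp2_twoStar (S : Setup N μ p X) (v : Fin N) : MemLp (twoStarRV X v) 2 μ :=
  memℒp2_bdd (measurable_twoStar S.meas v) (S.twoStar_abs_bdd v)

lemma mul_abs_bdd {f g : Ω → ℝ} {C D : ℝ} (hf : ∀ᵐ ω ∂μ, |f ω| ≤ C) (hg : ∀ᵐ ω ∂μ, |g ω| ≤ D) :
    ∀ᵐ ω ∂μ, |f ω * g ω| ≤ C * D := by
  filter_upwards [hf, hg] with ω h1 h2
  rw [abs_mul]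
  exact mul_le_mul h1 h2 (abs_nonneg _) (le_trans (abs_nonneg _) h1)

lemma Setup.int_twoStar_deg (S : Setup N μ p X) (v : Fin N) :
    Integrable (fun ω => twoStarRV X v ω * degRV X v ω) μ :=
  int_bdd ((measurable_twoStar S.meas v).mul (measurable_deg S.meas v))
    (mul_abs_bdd (S.twoStar_abs_bdd v) (S.deg_abs_bdd v))

lemma Setup.int_twoStar_sq (S : Setup N μ p X) (v : Fin N) :
    Integrable (fun ω => twoStarRV X v ω * twoStarRV X v ω) μ :=
  int_bdd ((measurable_twoStar S.meas v).mul (measurable_twoStar S.meas v))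
    (mul_abs_bdd (S.twoStar_abs_bdd v) (S.twoStar_abs_bdd v))

lemma Setup.int_deg_sq (S : Setup N μ p X) (v : Fin N) :
    Integrable (fun ω => degRV X v ω * degRV X v ω) μ :=
  int_bdd ((measurable_deg S.meas v).mul (measurable_deg S.meas v))
    (mul_abs_bdd (S.deg_abs_bdd v) (S.deg_abs_bdd v))

/-! ### Cauchy–Schwarz lower bound for the variance of the two-star count -/

lemma Setup.variance_twoStar_ge (S : Setup N μ p X) (hN : 4 ≤ N) (hp : 0 < p) (hp1 : p < 1)
    (v : Fin N) :
    ((N : ℝ) - 1) * ((N : ℝ) - 2) ^ 2 * p ^ 3 * (1 - p)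
      ≤ variance (twoStarRV X v) μ := by
  classical
  set A := twoStarRV X v with hA
  set B := degRV X v with hB
  have hNR : (3 : ℝ) ≤ (N : ℝ) - 1 := by
    have : (4 : ℝ) ≤ (N : ℝ) := by exact_mod_cast hN
    linarith
  -- moments
  have hmA : ∫ ω, A ω ∂μ = ((N : ℝ) - 1) * (((N : ℝ) - 2) * p ^ 2) := S.integral_twoStar hN v
  have hmB : ∫ ω, B ω ∂μ = ((N : ℝ) - 1) * p := S.integral_deg v
  have hIAB : ∫ ω, A ω * B ω ∂μ
      = ((N : ℝ) - 1) * (((N : ℝ) - 2) * (p ^ 2 + ((N : ℝ) - 2) * p ^ 3)) :=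
    S.integral_twoStar_deg hN v
  have hIBB : ∫ ω, B ω * B ω ∂μ = ((N : ℝ) - 1) * (p + ((N : ℝ) - 2) * p ^ 2) :=
    S.integral_deg_sq hN v
  set mA : ℝ := ((N : ℝ) - 1) * (((N : ℝ) - 2) * p ^ 2) with hmAdef
  set mB : ℝ := ((N : ℝ) - 1) * p with hmBdef
  set cov : ℝ := ((N : ℝ) - 1) * ((N : ℝ) - 2) * p ^ 2 * (1 - p) with hcov
  set varB : ℝ := ((N : ℝ) - 1) * (p * (1 - p)) with hvarB
  have hvarBpos : 0 < varB := by
    rw [hvarB]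
    have := mul_pos hp (by linarith : (0:ℝ) < 1 - p)
    nlinarith
  set t : ℝ := cov / varB with ht
  set c : ℝ := mA - t * mB with hc
  -- the expanded square
  have hexp : (fun ω => (A ω - mA - t * (B ω - mB)) ^ 2)
      = fun ω => ((((A ω * A ω - (2 * t) * (A ω * B ω)) + t ^ 2 * (B ω * B ω))
          - (2 * c) * A ω) + (2 * (t * c)) * B ω) + c ^ 2 := by
    funext ω
    rw [hc]
    ring
  have hInt1 : Integrable (fun ω => A ω * A ω - (2 * t) * (A ω * B ω)) μ :=
    (S.int_twoStar_sq v).sub ((S.int_twoStar_deg v).const_mul _)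
  have hInt2 : Integrable (fun ω => A ω * A ω - (2 * t) * (A ω * B ω)
      + t ^ 2 * (B ω * B ω)) μ := hInt1.add ((S.int_deg_sq v).const_mul _)
  have hInt3 : Integrable (fun ω => A ω * A ω - (2 * t) * (A ω * B ω)
      + t ^ 2 * (B ω * B ω) - (2 * c) * A ω) μ := hInt2.sub ((S.int_twoStar v).const_mul _)
  have hInt4 : Integrable (fun ω => A ω * A ω - (2 * t) * (A ω * B ω)
      + t ^ 2 * (B ω * B ω) - (2 * c) * A ω + (2 * (t * c)) * B ω) μ :=
    hInt3.add ((S.int_deg v).const_mul _)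
  have hJ : 0 ≤ ∫ ω, (A ω - mA - t * (B ω - mB)) ^ 2 ∂μ :=
    integral_nonneg fun ω => sq_nonneg _
  rw [hexp] at hJ
  rw [integral_add hInt4 (integrable_const _), integral_add hInt3 ((S.int_deg v).const_mul _),
    integral_sub hInt2 ((S.int_twoStar v).const_mul _),
    integral_add hInt1 ((S.int_deg_sq v).const_mul _),
    integral_sub (S.int_twoStar_sq v) ((S.int_twoStar_deg v).const_mul _),
    integral_const_mul, integral_const_mul, integral_const_mul, integral_const_mul,
    integral_const] at hJ
  simp only [probReal_univ, measure_univ, ENNReal.toReal_one, smul_eq_mul, one_mul] at hJ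
  have hIAB' : ∫ ω, A ω * B ω ∂μ = cov + mA * mB := by rw [hIAB, hcov, hmAdef, hmBdef]; ring
  have hIBB' : ∫ ω, B ω * B ω ∂μ = varB + mB * mB := by rw [hIBB, hvarB, hmBdef]; ring
  have hAint : ∫ ω, A ω ∂μ = mA := hmA
  have hBint : ∫ ω, B ω ∂μ = mB := hmB
  rw [hIAB', hIBB', hAint, hBint] at hJ
  -- identify ∫ A*A with the variance
  have hvar : variance A μ = ∫ ω, A ω * A ω ∂μ - mA ^ 2 := by
    rw [variance_eq_sub (S.memℒp2_twoStar v)]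
    congr 1
    · apply integral_congr_ae
      filter_upwards with ω
      simp [pow_two]; rfl
    · rw [hAint]
  have hvarA : ∫ ω, A ω * A ω ∂μ = variance A μ + mA ^ 2 := by rw [hvar]; ring
  rw [hvarA] at hJ
  -- clean up the inequality
  have ht2 : t * varB = cov := by
    rw [ht]; field_simp
  have hJ2 : 0 ≤ variance A μ - 2 * t * cov + t ^ 2 * varB := by nlinarith [hJ]
  have ht3 : t ^ 2 * varB = t * cov := by rw [← ht2]; ring
  have hJ3 : t * cov ≤ variance A μ := by linarith [hJ2, ht3]
  have ht4 : t * cov = cov ^ 2 / varB := by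
    rw [ht]
    field_simp
  have hfin : cov ^ 2 / varB = ((N : ℝ) - 1) * ((N : ℝ) - 2) ^ 2 * p ^ 3 * (1 - p) := by
    rw [hcov, hvarB]
    rw [div_eq_iff (ne_of_gt hvarBpos), hvarB]
    ring
  linarith [hJ3, ht4.symm.trans_le hJ3, hfin ▸ (ht4.symm.trans_le hJ3)]


/-! ### Symmetry: relabelling vertices -/

def permEdge (g : Fin N → Fin N) (hg : Function.Injective g) (e : EdgeIdx N) : EdgeIdx N :=
  symEdge (g e.1.1) (g e.1.2) (fun hc => ne_of_lt e.2 (hg hc))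

lemma permEdge_symEdge (g : Fin N → Fin N) (hg : Function.Injective g) {x y : Fin N}
    (h : x ≠ y) (h' : g x ≠ g y) :
    permEdge g hg (symEdge x y h) = symEdge (g x) (g y) h' := by
  by_cases h1 : x < y
  · have he : symEdge x y h = ⟨(x, y), h1⟩ := by unfold symEdge; simp [h1]
    rw [he]
    rfl
  · have h2 : y < x := h.lt_or_gt.resolve_left h1
    have he : symEdge x y h = ⟨(y, x), h2⟩ := by unfold symEdge; simp [h1]
    rw [he]
    show symEdge (g y) (g x) _ = symEdge (g x) (g y) h'
    exact (symEdge_comm h'.symm).symm.symm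

lemma permEdge_involutive (g : Fin N → Fin N) (hg : Function.Injective g)
    (hinv : ∀ x, g (g x) = x) : Function.Involutive (permEdge g hg) := by
  intro e
  have h2 : g e.1.1 ≠ g e.1.2 := fun hc => ne_of_lt e.2 (hg hc)
  have h3 : g (g e.1.1) ≠ g (g e.1.2) := by
    rw [hinv, hinv]; exact ne_of_lt e.2
  have : permEdge g hg e = symEdge (g e.1.1) (g e.1.2) h2 := rfl
  rw [this, permEdge_symEdge g hg h2 h3]
  have h4 : symEdge (g (g e.1.1)) (g (g e.1.2)) h3
      = symEdge e.1.1 e.1.2 (ne_of_lt e.2) := by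
    congr 1 <;> rw [hinv]
  rw [h4, symEdge_idx]

lemma edgeVar_perm (g : Fin N → Fin N) (hg : Function.Injective g)
    (X : EdgeIdx N → Ω → ℝ) (a b : Fin N) (ω : Ω) :
    edgeVar (fun e => X (permEdge g hg e)) a b ω = edgeVar X (g a) (g b) ω := by
  by_cases h : a = b
  · subst h; rw [edgeVar_self, edgeVar_self]
  · have h' : g a ≠ g b := fun hc => h (hg hc)
    rw [edgeVar_eq _ h, edgeVar_eq X h']
    show X (permEdge g hg (symEdge a b h)) ω = _
    rw [permEdge_symEdge g hg h h']

lemma erase_univ_image (σ : Equiv.Perm (Fin N)) (a : Fin N) :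
    (Finset.univ : Finset (Fin N)).erase (σ a) = ((Finset.univ : Finset (Fin N)).erase a).image σ := by
  apply Finset.ext
  intro x
  rw [Finset.mem_erase, Finset.mem_image]
  constructor
  · intro hx
    exact ⟨σ.symm x, Finset.mem_erase.mpr ⟨fun hc => hx.1
      (by rw [← σ.apply_symm_apply x, hc]), Finset.mem_univ _⟩, σ.apply_symm_apply x⟩
  · rintro ⟨y, hy, rfl⟩
    exact ⟨fun hc => (Finset.mem_erase.mp hy).1 (σ.injective hc), Finset.mem_univ _⟩

lemma twoStar_perm (σ : Equiv.Perm (Fin N)) (X : EdgeIdx N → Ω → ℝ) (v : Fin N) (ω : Ω) :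
    twoStarRV (fun e => X (permEdge σ σ.injective e)) v ω = twoStarRV X (σ v) ω := by
  unfold twoStarRV
  simp only [edgeVar_perm σ σ.injective X]
  rw [erase_univ_image σ v,
    Finset.sum_image (fun x _ y _ h => σ.injective h)]
  refine Finset.sum_congr rfl fun w hw => ?_
  rw [show ((((Finset.univ : Finset (Fin N)).erase v).image σ).erase (σ w))
      = ((((Finset.univ : Finset (Fin N)).erase v).erase w).image σ)
      from (Finset.image_erase σ.injective _ _).symm,
    Finset.sum_image (fun x _ y _ h => σ.injective h)]

/-! ### Equality of joint laws -/

noncomputable instance : Fintype (EdgeIdx N) := Subtype.fintype _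

lemma Setup.map_joint (S : Setup N μ p X) (g : EdgeIdx N → EdgeIdx N)
    (hg : Function.Bijective g) :
    μ.map (fun ω (e : EdgeIdx N) => X (g e) ω) = Measure.pi (fun _ => bernoulliRM p) := by
  haveI := bern_prob S.hp0 S.hp1
  refine (Measure.pi_eq fun s hs => ?_).symm
  have hmeas : Measurable (fun ω (e : EdgeIdx N) => X (g e) ω) :=
    measurable_pi_lambda _ (fun e => S.meas (g e))
  rw [Measure.map_apply hmeas (MeasurableSet.univ_pi hs)]
  set G := Equiv.ofBijective g hg with hG
  have hpre : (fun ω (e : EdgeIdx N) => X (g e) ω) ⁻¹' (Set.univ.pi s)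
      = ⋂ e, X (g e) ⁻¹' s e := by
    ext ω
    simp [Set.mem_pi, Set.mem_iInter]
  have hre : ⋂ e, X (g e) ⁻¹' s e = ⋂ e', X e' ⁻¹' s (G.symm e') := by
    rw [← Function.Surjective.iInter_comp (f := g) hg.surjective (fun e' => X e' ⁻¹' s (G.symm e'))]
    refine Set.iInter_congr fun e => ?_
    rw [show G.symm (g e) = e from G.symm_apply_apply e]
  have huniv : ⋂ e', X e' ⁻¹' s (G.symm e')
      = ⋂ e' ∈ (Finset.univ : Finset (EdgeIdx N)), X e' ⁻¹' s (G.symm e') := by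
    simp
  rw [hpre, hre, huniv,
    S.indep.measure_inter_preimage_eq_mul Finset.univ (fun i _ => hs _)]
  have hmarg : ∀ i : EdgeIdx N, μ (X i ⁻¹' s (G.symm i)) = bernoulliRM p (s (G.symm i)) :=
    fun i => by rw [← Measure.map_apply (S.meas i) (hs _), S.dist i]
  rw [Finset.prod_congr rfl (fun i _ => hmarg i)]
  exact Equiv.prod_comp G.symm (fun e => bernoulliRM p (s e))

lemma Setup.map_twoStar_eq (S : Setup N μ p X) (v v₀ : Fin N) :
    μ.map (twoStarRV X v) = μ.map (twoStarRV X v₀) := by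
  classical
  set σ : Equiv.Perm (Fin N) := Equiv.swap v₀ v with hσ
  set g : EdgeIdx N → EdgeIdx N := permEdge σ σ.injective with hg
  have hginv : Function.Involutive g :=
    permEdge_involutive σ σ.injective (fun x => Equiv.swap_apply_self v₀ v x)
  have hgbij : Function.Bijective g := hginv.bijective
  set G : (EdgeIdx N → ℝ) → ℝ := twoStarRV (fun e (y : EdgeIdx N → ℝ) => y e) v₀ with hGdef
  have hGmeas : Measurable G :=
    measurable_twoStar (fun e => measurable_pi_apply e) v₀
  have h1 : twoStarRV X v = fun ω => G ((fun ω (e : EdgeIdx N) => X (g e) ω) ω) := by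
    funext ω
    have h := twoStar_perm σ X v₀ ω
    rw [show σ v₀ = v from Equiv.swap_apply_left v₀ v] at h
    rw [← h]
    rfl
  have h2 : twoStarRV X v₀ = fun ω => G ((fun ω (e : EdgeIdx N) => X e ω) ω) := by
    funext ω
    rfl
  have hm1 : Measurable fun ω (e : EdgeIdx N) => X (g e) ω :=
    measurable_pi_lambda _ fun e => S.meas (g e)
  have hm2 : Measurable fun ω (e : EdgeIdx N) => X e ω :=
    measurable_pi_lambda _ fun e => S.meas e
  rw [h1, h2,
    show (fun ω => G ((fun ω (e : EdgeIdx N) => X (g e) ω) ω))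
      = G ∘ (fun ω (e : EdgeIdx N) => X (g e) ω) from rfl,
    show (fun ω => G ((fun ω (e : EdgeIdx N) => X e ω) ω))
      = G ∘ (fun ω (e : EdgeIdx N) => X e ω) from rfl,
    ← Measure.map_map hGmeas hm1, ← Measure.map_map hGmeas hm2,
    S.map_joint g hgbij]
  have hid := S.map_joint id Function.bijective_id
  simp only [id_eq] at hid
  rw [hid]

lemma Setup.tail_eq (S : Setup N μ p X) (v v₀ : Fin N) (m : ℝ) :
    μ {ω | m ≤ |twoStarRV X v ω - m|} = μ {ω | m ≤ |twoStarRV X v₀ ω - m|} := by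
  have hset : MeasurableSet {x : ℝ | m ≤ |x - m|} := by
    have : {x : ℝ | m ≤ |x - m|} = (fun x => |x - m|) ⁻¹' (Set.Ici m) := rfl
    rw [this]
    exact ((measurable_id.sub measurable_const).abs) measurableSet_Ici
  have e1 : {ω | m ≤ |twoStarRV X v ω - m|} = twoStarRV X v ⁻¹' {x | m ≤ |x - m|} := rfl
  have e2 : {ω | m ≤ |twoStarRV X v₀ ω - m|} = twoStarRV X v₀ ⁻¹' {x | m ≤ |x - m|} := rfl
  rw [e1, e2, ← Measure.map_apply (measurable_twoStar S.meas v) hset,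
    ← Measure.map_apply (measurable_twoStar S.meas v₀) hset, S.map_twoStar_eq v v₀]

end ERH

open ERH in
/-- **Claim 1 (high-probability bound on two-hop neighborhoods in Erdős–Rényi graphs).**
For the Erdős–Rényi graph `𝓡(N, p)` with `N ≥ 4`, `p ∈ (0,1)` and average degree
`⟨d⟩ = (N−1)p`, with `L_v = D_v + D_{2v}`,
`P(∀ v, L_v ≤ 2⟨d⟩ + 2⟨d⟩²) ≥ 1 − N·exp(−2p²(N−1)) − N·Var(D_{2v₀}) / (E[D_{2v₀}])²`
for any fixed vertex `v₀`. -/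
theorem er_two_hop_high_probability_bound
    {Ω : Type*} [MeasurableSpace Ω] (μ : Measure Ω) [IsProbabilityMeasure μ]
    (N : ℕ) (hN : 4 ≤ N) (p : ℝ) (hp : p ∈ Set.Ioo (0:ℝ) 1)
    (X : EdgeIdx N → Ω → ℝ) (hXmeas : ∀ e, Measurable (X e))
    (hXindep : iIndepFun X μ)
    (hXdist : ∀ e, Measure.map (X e) μ = bernoulliRM p)
    (v₀ : Fin N) :
    1 - N * Real.exp (-2 * p ^ 2 * ((N : ℝ) - 1))
      - N * variance (twoStarRV X v₀) μ / (∫ ω, twoStarRV X v₀ ω ∂μ) ^ 2 ≤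
      (μ {ω | ∀ v, degRV X v ω + twoStarRV X v ω ≤
          2 * (((N : ℝ) - 1) * p) + 2 * (((N : ℝ) - 1) * p) ^ 2}).toReal := by
  obtain ⟨hp0, hp1⟩ := hp
  have S : Setup N μ p X := ⟨hp0.le, hp1.le, hXmeas, hXindep, hXdist⟩
  have hNR : (4 : ℝ) ≤ (N : ℝ) := by exact_mod_cast hN
  set d : ℝ := ((N : ℝ) - 1) * p with hd
  set m : ℝ := ((N : ℝ) - 1) * (((N : ℝ) - 2) * p ^ 2) with hmdef
  have hm : ∫ ω, twoStarRV X v₀ ω ∂μ = m := S.integral_twoStar hN v₀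
  have hmpos : 0 < m := by
    rw [hmdef]
    have h1 : (0:ℝ) < (N : ℝ) - 1 := by linarith
    have h2 : (0:ℝ) < (N : ℝ) - 2 := by linarith
    positivity
  set V : ℝ := variance (twoStarRV X v₀) μ with hV
  have hVnonneg : 0 ≤ V := variance_nonneg _ _
  have hExpPos : 0 < (N : ℝ) * Real.exp (-2 * p ^ 2 * ((N : ℝ) - 1)) := by
    have : (0:ℝ) < (N : ℝ) := by linarith
    positivity
  have hprob0 : 0 ≤ (μ {ω | ∀ v, degRV X v ω + twoStarRV X v ω
      ≤ 2 * d + 2 * d ^ 2}).toReal := ENNReal.toReal_nonneg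
  rw [hm]
  by_cases hcase : p ≤ 1 / 2
  · -- trivial case: the subtracted Chebyshev term already exceeds 1
    have hVlower := S.variance_twoStar_ge hN hp0 hp1 v₀
    have h1 : 1 ≤ (N : ℝ) * V / m ^ 2 := by
      rw [le_div_iff₀ (by positivity : (0:ℝ) < m ^ 2), one_mul]
      have c0 : (0:ℝ) ≤ ((N : ℝ) - 1) * ((N : ℝ) - 2) ^ 2 * p ^ 3 := by
        have h1 : (0:ℝ) ≤ (N : ℝ) - 1 := by linarith
        have h2 : (0:ℝ) ≤ (N : ℝ) - 2 := by linarith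
        positivity
      have c2 : ((N : ℝ) - 1) * p ≤ (N : ℝ) * (1 - p) := by
        have := mul_le_mul_of_nonneg_left hcase (by linarith : (0:ℝ) ≤ (N : ℝ))
        nlinarith [hp0.le]
      calc m ^ 2 = (((N : ℝ) - 1) * ((N : ℝ) - 2) ^ 2 * p ^ 3) * (((N : ℝ) - 1) * p) := by
            rw [hmdef]; ring
        _ ≤ (((N : ℝ) - 1) * ((N : ℝ) - 2) ^ 2 * p ^ 3) * ((N : ℝ) * (1 - p)) :=
            mul_le_mul_of_nonneg_left c2 c0
        _ = (N : ℝ) * (((N : ℝ) - 1) * ((N : ℝ) - 2) ^ 2 * p ^ 3 * (1 - p)) := by ring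
        _ ≤ (N : ℝ) * V := mul_le_mul_of_nonneg_left hVlower (by linarith)
    linarith [hExpPos, h1, hprob0]
  · push_neg at hcase
    set Gset : Set Ω := {ω | ∀ v, degRV X v ω + twoStarRV X v ω ≤ 2 * d + 2 * d ^ 2}
      with hGset
    have hGmeas : MeasurableSet Gset := by
      have : Gset = ⋂ v, {ω | degRV X v ω + twoStarRV X v ω ≤ 2 * d + 2 * d ^ 2} := by
        ext ω; simp [hGset, Set.mem_iInter]
      rw [this]
      exact MeasurableSet.iInter fun v => measurableSet_le
        ((measurable_deg S.meas v).add (measurable_twoStar S.meas v)) measurable_const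
    have hsub : ∀ᵐ ω ∂μ, ω ∈ Gsetᶜ → ω ∈ ⋃ v, {ω' | m ≤ |twoStarRV X v ω' - m|} := by
      filter_upwards [S.ae01] with ω h01 hmem
      simp only [hGset, Set.mem_compl_iff, Set.mem_setOf_eq, not_forall, not_le] at hmem
      obtain ⟨v, hv⟩ := hmem
      refine Set.mem_iUnion.mpr ⟨v, ?_⟩
      have hdb := deg_bounds h01 v
      have hdeg2 : degRV X v ω ≤ 2 * d := by
        have hh : (N : ℝ) - 1 ≤ 2 * d := by rw [hd]; nlinarith [hcase]
        linarith [hdb.2]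
      have h2star : 2 * d ^ 2 < twoStarRV X v ω := by linarith
      have hmd : m ≤ d ^ 2 := by
        rw [hmdef, hd]
        nlinarith [sq_nonneg p, hp0.le]
      show m ≤ |twoStarRV X v ω - m|
      exact le_abs.mpr (Or.inl (by nlinarith))
    have htail : ∀ v, μ {ω' | m ≤ |twoStarRV X v ω' - m|} ≤ ENNReal.ofReal (V / m ^ 2) := by
      intro v
      rw [S.tail_eq v v₀ m]
      have hcheb := meas_ge_le_variance_div_sq (μ := μ) (S.memℒp2_twoStar v₀) hmpos
      simp only [hm] at hcheb
      rw [hV]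
      exact hcheb
    have hcompl : μ Gsetᶜ ≤ (N : ℕ) * ENNReal.ofReal (V / m ^ 2) := by
      calc μ Gsetᶜ ≤ μ (⋃ v, {ω' | m ≤ |twoStarRV X v ω' - m|}) := measure_mono_ae hsub
        _ ≤ ∑ v : Fin N, μ {ω' | m ≤ |twoStarRV X v ω' - m|} :=
            measure_iUnion_fintype_le _ _
        _ ≤ ∑ _v : Fin N, ENNReal.ofReal (V / m ^ 2) :=
            Finset.sum_le_sum (fun v _ => htail v)
        _ = (N : ℕ) * ENNReal.ofReal (V / m ^ 2) := by
            rw [Finset.sum_const, Finset.card_univ, Fintype.card_fin, nsmul_eq_mul]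
    have hVm : 0 ≤ V / m ^ 2 := div_nonneg hVnonneg (sq_nonneg m)
    have hfin : ((N : ℕ) : ENNReal) * ENNReal.ofReal (V / m ^ 2) ≠ ⊤ :=
      ENNReal.mul_ne_top (ENNReal.natCast_ne_top N) ENNReal.ofReal_ne_top
    have hGcompl_real : (μ Gsetᶜ).toReal ≤ (N : ℝ) * (V / m ^ 2) := by
      have h := ENNReal.toReal_mono hfin hcompl
      rwa [ENNReal.toReal_mul, ENNReal.toReal_ofReal hVm, ENNReal.toReal_natCast] at h
    have hadd : (μ Gset).toReal + (μ Gsetᶜ).toReal = 1 := by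
      have h1 := measure_add_measure_compl hGmeas (μ := μ)
      have h2 := congrArg ENNReal.toReal h1
      rw [ENNReal.toReal_add (measure_ne_top μ _) (measure_ne_top μ _)] at h2
      rw [h2, measure_univ, ENNReal.toReal_one]
    have hdivassoc : (N : ℝ) * V / m ^ 2 = (N : ℝ) * (V / m ^ 2) := mul_div_assoc _ _ _
    rw [hdivassoc]
    linarith [hExpPos, hGcompl_real, hadd, hprob0]
end
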